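/- arXiv:math/0210105 — 10 statements merged into one kernel-verified Lean document; each statement's English description precedes it below -/
import Mathlib

section
/- Let k be a perfect field of characteristic 2 and let K/k be a cubic field extension. Then there exists a generator θ of K over k (i.e. K = k(θ)) whose minimal polynomial over k has the form x³ + s x + s for some s ∈ k with s ≠ 0. -/
open Polynomial

section AS

variable {k K : Type*} [Field k] [Field K] [Algebra k K]

lemma AS.natDegree_three (h3 : Module.finrank k K = 3) (θ : K)
    (hθ : θ ∉ (algebraMap k K).range) : (minpoly k θ).natDegree = 3 := by
  have hfin : FiniteDimensional k K := .of_finrank_pos (by rw [h3]; norm_num)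
  have hint : IsIntegral k θ := IsIntegral.of_finite k θ
  have hdvd : (minpoly k θ).natDegree ∣ 3 := h3 ▸ minpoly.degree_dvd hint
  rcases Nat.prime_three.eq_one_or_self_of_dvd _ hdvd with h1 | h1
  · exact absurd (minpoly.natDegree_eq_one_iff.mp h1) hθ
  · exact h1

lemma AS.minpoly_eq (h3 : Module.finrank k K = 3) (θ : K)
    (hθ : θ ∉ (algebraMap k K).range) (g : k[X]) (hm : g.Monic)
    (hdeg : g.natDegree = 3) (hroot : aeval θ g = 0) :
    minpoly k θ = g ∧ IntermediateField.adjoin k {θ} = ⊤ := by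
  have hfin : FiniteDimensional k K := .of_finrank_pos (by rw [h3]; norm_num)
  have hint : IsIntegral k θ := IsIntegral.of_finite k θ
  have hd := AS.natDegree_three h3 θ hθ
  have hdvd : minpoly k θ ∣ g := minpoly.dvd k θ hroot
  refine ⟨Polynomial.eq_of_dvd_of_natDegree_le_of_leadingCoeff hdvd
    (by rw [hd, hdeg]) (by rw [(minpoly.monic hint).leadingCoeff, hm.leadingCoeff]), ?_⟩
  exact (Field.primitive_element_iff_minpoly_natDegree_eq k θ).mpr (by rw [hd, h3])

lemma AS.final (h3 : Module.finrank k K = 3) (θ : K)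
    (hθ : θ ∉ (algebraMap k K).range) (p q : k) (hp : p ≠ 0)
    (hroot : θ ^ 3 + algebraMap k K p * θ + algebraMap k K q = 0) :
    ∃ (θ' : K) (s : k), s ≠ 0 ∧ IntermediateField.adjoin k {θ'} = ⊤ ∧
      minpoly k θ' = X ^ 3 + C s * X + C s := by
  set A := algebraMap k K with hA
  have hθ0 : θ ≠ 0 := fun h => hθ ⟨0, by simp [h]⟩
  have hq : q ≠ 0 := by
    intro h
    rw [h, map_zero, add_zero] at hroot
    have hfac : θ * (θ ^ 2 + A p) = 0 := by linear_combination hroot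
    have hsq : θ ^ 2 + A p = 0 := by
      rcases mul_eq_zero.mp hfac with h' | h'
      · exact absurd h' hθ0
      · exact h'
    have hroot2 : aeval θ ((X : k[X]) ^ 2 + C p) = 0 := by
      simpa only [map_add, map_pow, aeval_X, aeval_C] using hsq
    have hne : ((X : k[X]) ^ 2 + C p) ≠ 0 := by
      intro h'
      have hdd : ((X : k[X]) ^ 2 + C p).natDegree = 2 := by compute_degree!
      rw [h'] at hdd; simp at hdd
    have hle := Polynomial.natDegree_le_of_dvd (minpoly.dvd k θ hroot2) hne
    have hdd : ((X : k[X]) ^ 2 + C p).natDegree = 2 := by compute_degree!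
    rw [AS.natDegree_three h3 θ hθ, hdd] at hle
    omega
  set lam := p / q with hlamdef
  have hlam : lam ≠ 0 := div_ne_zero hp hq
  have hlq : lam * q = p := div_mul_cancel₀ p hq
  set s := lam ^ 2 * p with hs
  have hsne : s ≠ 0 := mul_ne_zero (pow_ne_zero _ hlam) hp
  have hlamK : A lam ≠ 0 := by
    simpa using (map_ne_zero (algebraMap k K)).mpr hlam
  have hθ' : A lam * θ ∉ (algebraMap k K).range := by
    rintro ⟨e, he⟩
    refine hθ ⟨e / lam, ?_⟩
    rw [map_div₀, he, mul_comm, mul_div_assoc, div_self hlamK, mul_one]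
  have hroot' : aeval (A lam * θ) ((X : k[X]) ^ 3 + C s * X + C s) = 0 := by
    have hlqK : A lam * A q = A p := by rw [← map_mul, hlq]
    simp only [map_add, map_mul, map_pow, aeval_X, aeval_C, hs]
    linear_combination (A lam) ^ 3 * hroot - (A lam) ^ 2 * hlqK
  have hmon : ((X : k[X]) ^ 3 + C s * X + C s).Monic := by
    have h' : ((X : k[X]) ^ 3 + C s * X + C s) = X ^ 3 + (C s * X + C s) := by ring
    rw [h']
    apply monic_X_pow_add
    have : (C s * X + C s : k[X]).degree ≤ 1 := by compute_degree
    exact lt_of_le_of_lt this (by norm_num)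
  have hdeg : ((X : k[X]) ^ 3 + C s * X + C s).natDegree = 3 := by compute_degree!
  obtain ⟨h1, h2⟩ := AS.minpoly_eq h3 (A lam * θ) hθ' _ hmon hdeg hroot'
  exact ⟨A lam * θ, s, hsne, h2, h1⟩

end AS

/-- Let `k` be a perfect field of characteristic 2 and let `K/k` be a cubic
field extension. Then there exists a generator `θ` of `K` over `k` (i.e. `K = k(θ)`) whose
minimal polynomial over `k` has the form `x³ + s x + s` for some `s ∈ k`, `s ≠ 0`. -/
theorem exists_generator_minpoly_cubic_artin_schreier
    (k K : Type*) [Field k] [CharP k 2] [PerfectField k] [Field K] [Algebra k K]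
    (h3 : Module.finrank k K = 3) :
    ∃ (θ : K) (s : k), s ≠ 0 ∧ IntermediateField.adjoin k {θ} = ⊤ ∧
      minpoly k θ = X ^ 3 + C s * X + C s := by
  have hfin : FiniteDimensional k K := .of_finrank_pos (by rw [h3]; norm_num)
  have hchar : CharP K 2 := charP_of_injective_algebraMap (algebraMap k K).injective 2
  have h2K : (2 : K) = 0 := CharTwo.two_eq_zero
  set A := algebraMap k K with hA
  -- pick an element outside the base field
  obtain ⟨θ₀, hθ₀⟩ : ∃ θ₀ : K, θ₀ ∉ (algebraMap k K).range := by
    by_contra h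
    push_neg at h
    have hbt : (⊥ : Subalgebra k K) = ⊤ := by
      rw [eq_top_iff]
      intro x _
      rw [Algebra.mem_bot]
      obtain ⟨y, hy⟩ := h x
      exact ⟨y, hy⟩
    rw [Subalgebra.bot_eq_top_iff_finrank_eq_one, h3] at hbt
    norm_num at hbt
  have hint : IsIntegral k θ₀ := IsIntegral.of_finite k θ₀
  have hd : (minpoly k θ₀).natDegree = 3 := AS.natDegree_three h3 θ₀ hθ₀
  set a := (minpoly k θ₀).coeff 2 with ha
  set b := (minpoly k θ₀).coeff 1 with hb
  set c := (minpoly k θ₀).coeff 0 with hc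
  have hc3 : (minpoly k θ₀).coeff 3 = 1 := by
    rw [← hd]; exact (minpoly.monic hint).coeff_natDegree
  have h0 : θ₀ ^ 3 + A a * θ₀ ^ 2 + A b * θ₀ + A c = 0 := by
    have h := minpoly.aeval k θ₀
    rw [aeval_eq_sum_range' (n := 4) (by rw [hd]; norm_num)] at h
    simp only [Finset.sum_range_succ, Finset.sum_range_zero, Algebra.smul_def, zero_add,
      pow_zero, mul_one, pow_one, hc3, map_one, one_mul, ← ha, ← hb, ← hc, ← hA] at h
    linear_combination h
  set θ₁ := θ₀ + A a with hθ₁def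
  have hθ₁ : θ₁ ∉ (algebraMap k K).range := by
    rintro ⟨e, he⟩
    refine hθ₀ ⟨e - a, ?_⟩
    rw [map_sub, he, hθ₁def]; ring
  have h1 : θ₁ ^ 3 + A (a ^ 2 + b) * θ₁ + A (a * b + c) = 0 := by
    simp only [map_add, map_mul, map_pow, hθ₁def]
    linear_combination h0 + (A a * θ₀ ^ 2 + 2 * (A a) ^ 2 * θ₀ + (A a) ^ 3 + A a * A b) * h2K
  by_cases hP : a ^ 2 + b = 0
  · -- depressed cubic is x³ + q : replace θ₁ by θ₁ + θ₁²
    set q := a * b + c with hqdef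
    have hcube : θ₁ ^ 3 + A q = 0 := by
      rw [hP, map_zero, zero_mul, add_zero] at h1
      exact h1
    have hq0 : q ≠ 0 := by
      intro h
      rw [h, map_zero, add_zero] at hcube
      have : θ₁ = 0 := by
        have := pow_eq_zero_iff (n := 3) (by norm_num) |>.mp hcube
        exact this
      exact hθ₁ ⟨0, by simp [this]⟩
    have hη : θ₁ + θ₁ ^ 2 ∉ (algebraMap k K).range := by
      rintro ⟨e, he⟩
      have hroot2 : aeval θ₁ ((X : k[X]) ^ 2 + X - C e) = 0 := by
        simp only [map_add, map_sub, map_pow, aeval_X, aeval_C, ← hA]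
        linear_combination -he
      have hdd : ((X : k[X]) ^ 2 + X - C e).natDegree = 2 := by compute_degree!
      have hne : ((X : k[X]) ^ 2 + X - C e) ≠ 0 := by
        intro h'
        rw [h'] at hdd; simp at hdd
      have hle := Polynomial.natDegree_le_of_dvd (minpoly.dvd k θ₁ hroot2) hne
      rw [AS.natDegree_three h3 θ₁ hθ₁, hdd] at hle
      omega
    have hηroot : (θ₁ + θ₁ ^ 2) ^ 3 + A q * (θ₁ + θ₁ ^ 2) + A (q + q ^ 2) = 0 := by
      simp only [map_add, map_pow]
      linear_combination (θ₁ ^ 3 + 3 * θ₁ ^ 2 + 3 * θ₁ + 1 - A q) * hcube +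
        ((A q) ^ 2 - A q * θ₁ ^ 2 - A q * θ₁) * h2K
    exact AS.final h3 (θ₁ + θ₁ ^ 2) hη q (q + q ^ 2) hq0 hηroot
  · exact AS.final h3 θ₁ hθ₁ (a ^ 2 + b) (a * b + c) hP h1
end

section
/- Let k be a field of characteristic 2, let s ∈ k with s ≠ 0 be such that x³ + s x + s is irreducible in k[x], let θ be a root of x³ + s x + s in a fixed algebraic closure k̄ of k, and let w ∈ k̄ satisfy w + w² = s + 1. Then the three roots of x³ + s x + s in k̄ are exactly θ, θ(θ + w) and θ(θ + w + 1). -/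
open Polynomial

/-- Let `k` be a field of characteristic 2, `s ∈ k`, `s ≠ 0`, such that
`x³ + s x + s` is irreducible in `k[x]`; let `θ` be a root of `x³ + s x + s` in a fixed
algebraic closure `k̄` of `k`, and let `w ∈ k̄` satisfy `w + w² = s + 1`.  Then the three
roots of `x³ + s x + s` in `k̄` are exactly `θ`, `θ(θ + w)` and `θ(θ + w + 1)`. -/
theorem roots_of_artin_schreier_cubic
    (k : Type*) [Field k] [CharP k 2] (s : k) (hs : s ≠ 0)
    (hirr : Irreducible (X ^ 3 + C s * X + C s : k[X]))
    (θ w : AlgebraicClosure k)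
    (hθ : θ ^ 3 + algebraMap k (AlgebraicClosure k) s * θ + algebraMap k (AlgebraicClosure k) s
        = 0)
    (hw : w + w ^ 2 = algebraMap k (AlgebraicClosure k) s + 1) :
    {x : AlgebraicClosure k |
        x ^ 3 + algebraMap k (AlgebraicClosure k) s * x + algebraMap k (AlgebraicClosure k) s
          = 0}
      = {θ, θ * (θ + w), θ * (θ + w + 1)} ∧
    θ ≠ θ * (θ + w) ∧ θ ≠ θ * (θ + w + 1) ∧ θ * (θ + w) ≠ θ * (θ + w + 1) := by
  letI : CharP (AlgebraicClosure k) 2 :=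
    charP_of_injective_algebraMap (algebraMap k (AlgebraicClosure k)).injective 2
  set S : AlgebraicClosure k := algebraMap k (AlgebraicClosure k) s with hSdef
  have hc : (2 : AlgebraicClosure k) = 0 := by
    exact_mod_cast CharP.cast_eq_zero (AlgebraicClosure k) 2
  have hS0 : S ≠ 0 := by
    simpa [hSdef] using (map_ne_zero (algebraMap k (AlgebraicClosure k))).mpr hs
  have hθ0 : θ ≠ 0 := by
    intro h
    apply hS0
    have := hθ
    rw [h] at this
    simpa using this
  -- key quadratic non-relation: θ² + θ ≠ S + 1
  have hq : θ ^ 2 + θ ≠ S + 1 := by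
    intro h
    have h10 : (1 : AlgebraicClosure k) = 0 := by
      linear_combination hθ - (θ + 1) * h + (θ ^ 2 - S * θ - S) * hc
    exact one_ne_zero h10
  -- the factorization identity
  have key : ∀ x : AlgebraicClosure k,
      x ^ 3 + S * x + S = (x - θ) * (x - θ * (θ + w)) * (x - θ * (θ + w + 1)) := by
    intro x
    linear_combination
      (-S + w + w ^ 2 + θ + 2 * θ * w + θ ^ 2 - 3 * x - 2 * x * w - x * θ) * hθ +
      (-S - θ * S - x * θ ^ 2) * hw +
      (-θ * S - θ * w * S - θ ^ 2 * S - θ ^ 2 * w * S + 2 * x * S + x * w * S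
        + 2 * x * θ * S + x * θ * w * S - x * θ ^ 2 - x * θ ^ 2 * w + x ^ 2 * θ
        + x ^ 2 * θ * w + x ^ 2 * θ ^ 2) * hc
  have hne1 : θ ≠ θ * (θ + w) := by
    intro h
    apply hq
    have hcan : θ * 1 = θ * (θ + w) := by linear_combination h
    have h1 : (1 : AlgebraicClosure k) = θ + w := mul_left_cancel₀ hθ0 hcan
    linear_combination hw + (w + 2 - θ) * h1 + (2 * θ - 1) * hc
  have hne2 : θ ≠ θ * (θ + w + 1) := by
    intro h
    apply hq
    have hcan : θ * 1 = θ * (θ + w + 1) := by linear_combination h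
    have h1 : (1 : AlgebraicClosure k) = θ + w + 1 := mul_left_cancel₀ hθ0 hcan
    linear_combination hw + (w + 1 - θ) * h1 + θ * hc
  have hne3 : θ * (θ + w) ≠ θ * (θ + w + 1) := by
    intro h
    have := mul_left_cancel₀ hθ0 h
    exact one_ne_zero (α := AlgebraicClosure k) (by linear_combination -this)
  refine ⟨?_, hne1, hne2, hne3⟩
  ext x
  simp only [Set.mem_setOf_eq, Set.mem_insert_iff, Set.mem_singleton_iff]
  constructor
  · intro hx
    have := (key x).symm.trans hx
    rcases mul_eq_zero.mp this with h' | h'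
    · rcases mul_eq_zero.mp h' with h'' | h''
      · exact Or.inl (sub_eq_zero.mp h'')
      · exact Or.inr (Or.inl (sub_eq_zero.mp h''))
    · exact Or.inr (Or.inr (sub_eq_zero.mp h'))
  · rintro (rfl | rfl | rfl) <;> rw [key] <;> ring
end

section
/- Let k be a perfect field of characteristic 2, let s ∈ k with s ≠ 0 be such that x³ + s x + s is irreducible in k[x], and let K = k(θ) for a root θ of x³ + s x + s. Then the extension K/k is Galois (equivalently, cyclic of degree 3) if and only if s + 1 ∈ AS(k). -/
/-!
Since `θ³ + sθ + s = 0`, the cubic factors over `k(θ)` as `(X - θ)(X² + θX + θ² + s)`. In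
characteristic 2, a root `b` of the quadratic cofactor yields `w = θ + b/θ` with `w + w² = s + 1`;
conversely, a solution `x` of `x + x² = s + 1` yields the roots `θ² + xθ` and `θ² + xθ + θ` of the
cofactor. Since `w` satisfies a quadratic equation and lies in an extension of degree 3, it lies in
`k`. Thus the cubic splits in `k(θ)` iff `s + 1 ∈ AS(k)`. The cubic is separable, because its
derivative `X² + s` is nonzero, so `k(θ)/k` is Galois iff the cubic splits in `k(θ)`.
-/

open Polynomial IntermediateField Module

theorem isGalois_adjoin_simple_iff {F E : Type*} [Field F] [Field E] [Algebra F E] {α : E}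
    (hα : IsIntegral F α) :
    IsGalois F F⟮α⟯ ↔ IsSeparable F α ∧ ((minpoly F α).map (algebraMap F F⟮α⟯)).Splits := by
  refine ⟨fun _ ↦ ?_, fun ⟨hsep, hsplit⟩ ↦ ?_⟩
  · rw [IsSeparable, ← minpoly_gen]
    exact ⟨IsGalois.separable F (AdjoinSimple.gen F α), IsGalois.splits F (AdjoinSimple.gen F α)⟩
  · have := adjoin.finiteDimensional hα
    refine IsGalois.of_card_aut_eq_finrank F F⟮α⟯ ?_
    rw [Nat.card_congr (algEquivEquivAlgHom F F⟮α⟯).toEquiv,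
      card_algHom_adjoin_integral F hα hsep hsplit, adjoin.finrank hα]

theorem mem_range_algebraMap_of_aeval_eq_zero_of_odd_finrank {F L : Type*} [Field F] [Field L]
    [Algebra F L] [FiniteDimensional F L] (hL : Odd (finrank F L)) {p : F[X]} (hp0 : p ≠ 0)
    (hp : p.natDegree ≤ 2) {w : L} (hw : aeval w p = 0) : w ∈ (algebraMap F L).range := by
  have hdvd : (minpoly F w).natDegree ∣ finrank F L := minpoly.degree_dvd (.of_finite F w)
  have hle : (minpoly F w).natDegree ≤ p.natDegree := natDegree_le_of_dvd (minpoly.dvd F w hw) hp0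
  obtain ⟨m, hm⟩ := hL.of_dvd_nat hdvd
  exact minpoly.natDegree_eq_one_iff.mp (by omega)

theorem cubic_eq_X_sub_C_mul {R : Type*} [CommRing R] {s θ : R} (hθ : θ ^ 3 + s * θ + s = 0) :
    (X ^ 3 + C s * X + C s : R[X]) = (X - C θ) * (X ^ 2 + C θ * X + C (θ ^ 2 + s)) := by
  have hθ' : C θ ^ 3 + C s * C θ + C s = 0 := by simpa using congrArg C hθ
  simp only [map_add, map_pow]
  linear_combination hθ'

theorem quadratic_eq_X_sub_C_mul_X_sub_C {R : Type*} [CommRing R] [CharP R 2] {s θ x : R}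
    (hθ : θ ^ 3 + s * θ + s = 0) (hx : x + x ^ 2 = s + 1) :
    (X ^ 2 + C θ * X + C (θ ^ 2 + s) : R[X]) =
      (X - C (θ ^ 2 + x * θ)) * (X - C (θ ^ 2 + x * θ + θ)) := by
  have hprod : θ ^ 2 + s = (θ ^ 2 + x * θ) * (θ ^ 2 + x * θ + θ) := by
    linear_combination (norm := ring_nf) (-(θ + 1)) * hθ + θ ^ 2 * hx
    simp [CharTwo.two_eq_zero]
  rw [hprod, map_mul, map_add _ _ θ]
  linear_combination (norm := ring_nf)
  simp [CharTwo.two_eq_zero]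

theorem add_div_add_sq_eq_of_cubic_root {K : Type*} [Field K] [CharP K 2] {s θ b : K}
    (hθ0 : θ ≠ 0) (hθ : θ ^ 3 + s * θ + s = 0) (hb : b ^ 2 + θ * b + (θ ^ 2 + s) = 0) :
    (θ + b / θ) + (θ + b / θ) ^ 2 = s + 1 := by
  field_simp
  linear_combination (norm := ring_nf) hb + (θ + 1) * hθ
  simp [CharTwo.two_eq_zero]

theorem splits_map_cubic_iff_exists_add_sq_eq {k L : Type*} [Field k] [CharP k 2] [Field L]
    [Algebra k L] [FiniteDimensional k L] (hL : Odd (finrank k L)) {s : k} (hs : s ≠ 0) {θ : L}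
    (hθ : aeval θ (X ^ 3 + C s * X + C s) = 0) :
    ((X ^ 3 + C s * X + C s : k[X]).map (algebraMap k L)).Splits ↔
      ∃ x : k, x + x ^ 2 = s + 1 := by
  have := charP_of_injective_algebraMap (algebraMap k L).injective 2
  set t := algebraMap k L s
  replace hθ : θ ^ 3 + t * θ + t = 0 := by simpa [t] using hθ
  have hθ0 : θ ≠ 0 := by
    rintro rfl
    exact hs (by simpa [t] using hθ)
  rw [Polynomial.map_add, Polynomial.map_add, Polynomial.map_mul, Polynomial.map_pow, map_X, map_C,
    cubic_eq_X_sub_C_mul hθ, splits_X_sub_C_mul_iff]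
  constructor
  · intro hsplit
    have hdeg : (X ^ 2 + C θ * X + C (θ ^ 2 + t)).degree = 2 := by compute_degree!
    obtain ⟨b, hb⟩ := hsplit.exists_eval_eq_zero (by rw [hdeg]; decide)
    set w := θ + b / θ
    have hw : w + w ^ 2 = t + 1 := add_div_add_sq_eq_of_cubic_root hθ0 hθ (by simpa using hb)
    obtain ⟨x, hx⟩ := mem_range_algebraMap_of_aeval_eq_zero_of_odd_finrank hL
      (p := X ^ 2 + X - C (s + 1)) (Monic.ne_zero (by monicity!)) (by compute_degree!)
      (w := w) (by simp; linear_combination hw)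
    refine ⟨x, (algebraMap k L).injective ?_⟩
    simpa [hx, t] using hw
  · rintro ⟨x, hx⟩
    have hx' : algebraMap k L x + algebraMap k L x ^ 2 = t + 1 := by
      simpa [t] using congrArg (algebraMap k L) hx
    rw [quadratic_eq_X_sub_C_mul_X_sub_C hθ hx']
    exact (Splits.X_sub_C _).mul (Splits.X_sub_C _)

theorem isGalois_adjoin_root_artin_schreier_cubic_iff_general
    (k : Type*) [Field k] [CharP k 2] (s : k) (hs : s ≠ 0)
    (hirr : Irreducible (X ^ 3 + C s * X + C s : k[X]))
    (θ : AlgebraicClosure k)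
    (hθ : aeval θ (X ^ 3 + C s * X + C s : k[X]) = 0) :
    IsGalois k (IntermediateField.adjoin k {θ}) ↔ ∃ x : k, x + x ^ 2 = s + 1 := by
  have hmonic : (X ^ 3 + C s * X + C s : k[X]).Monic := by monicity!
  have hint : IsIntegral k θ := ⟨_, hmonic, hθ⟩
  have hmin : minpoly k θ = X ^ 3 + C s * X + C s :=
    (minpoly.eq_of_irreducible_of_monic hirr hθ hmonic).symm
  have hsep : IsSeparable k θ := by
    rw [IsSeparable, hmin, separable_iff_derivative_ne_zero hirr]
    intro h
    exact hs (by simpa using congrArg (eval 0) h)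
  have := adjoin.finiteDimensional hint
  have hdeg : finrank k k⟮θ⟯ = 3 := by
    rw [adjoin.finrank hint, hmin]
    compute_degree!
  rw [isGalois_adjoin_simple_iff hint, hmin, and_iff_right hsep]
  exact splits_map_cubic_iff_exists_add_sq_eq (by rw [hdeg]; decide) hs
    (hmin ▸ aeval_gen_minpoly k θ)

/-- Let `k` be a perfect field of characteristic 2, `s ∈ k`, `s ≠ 0`, be such
that `x³ + s x + s` is irreducible in `k[x]`, and let `K = k(θ)` for a root `θ` of
`x³ + s x + s`.  Then `K/k` is Galois (equivalently, cyclic of degree 3) if and only if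
`s + 1 ∈ AS(k)`, where `AS(x) = x + x²` is the Artin–Schreier map. -/
theorem isGalois_adjoin_root_artin_schreier_cubic_iff
    (k : Type*) [Field k] [CharP k 2] [PerfectField k] (s : k) (hs : s ≠ 0)
    (hirr : Irreducible (X ^ 3 + C s * X + C s : k[X]))
    (θ : AlgebraicClosure k)
    (hθ : aeval θ (X ^ 3 + C s * X + C s : k[X]) = 0) :
    IsGalois k (IntermediateField.adjoin k {θ}) ↔ ∃ x : k, x + x ^ 2 = s + 1 :=
  isGalois_adjoin_root_artin_schreier_cubic_iff_general k s hs hirr θ hθ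
end

section
/- Let k be a perfect field of characteristic 2 with algebraic closure k̄ and absolute Galois group G_k = Gal(k̄/k). Let G_k act on the projective line ℙ¹(k̄) coordinatewise and let PGL₂(k) act on ℙ¹(k̄) by projective linear transformations. If S, S′ ⊆ ℙ¹(k̄) are G_k-stable subsets with |S| = |S′| = 3, then there exists γ ∈ PGL₂(k) with γ(S) = S′ if and only if S and S′ are isomorphic as G_k-sets, i.e. there exists a G_k-equivariant bijection S → S′. -/
open scoped LinearAlgebra.Projectivization

noncomputable section

variable (k : Type*) [Field k] [CharP k 2] [PerfectField k]

/-- The semilinear endomorphism of `k̄²` induced by a `k`-automorphism `σ` of `k̄`. -/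
def galSemilinear (σ : AlgebraicClosure k ≃ₐ[k] AlgebraicClosure k) :
    (Fin 2 → AlgebraicClosure k)
      →ₛₗ[(σ : AlgebraicClosure k →+* AlgebraicClosure k)] (Fin 2 → AlgebraicClosure k) where
  toFun v := fun i => σ (v i)
  map_add' u v := by funext i; simp
  map_smul' c v := by funext i; simp [Pi.smul_apply, smul_eq_mul]

/-- The coordinatewise action of the absolute Galois group `G_k = Gal(k̄/k)` on the
projective line `ℙ¹(k̄)`: `σ·[x : y] = [σx : σy]`. -/
def galAct (σ : AlgebraicClosure k ≃ₐ[k] AlgebraicClosure k)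
    (p : ℙ (AlgebraicClosure k) (Fin 2 → AlgebraicClosure k)) :
    ℙ (AlgebraicClosure k) (Fin 2 → AlgebraicClosure k) :=
  Projectivization.map (galSemilinear k σ)
    (fun _ _ h => funext fun i => σ.injective (congrFun h i)) p

/-- An invertible matrix acts injectively on row vectors. -/
theorem mulVecLin_injective_of_unit {R : Type*} [CommRing R] {n : Type*} [Fintype n]
    [DecidableEq n] (g : GL n R) :
    Function.Injective (Matrix.mulVecLin (g : Matrix n n R)) := by
  intro u v h
  have h' : (g : Matrix n n R).mulVec u = (g : Matrix n n R).mulVec v := h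
  have h2 := congrArg ((↑(g⁻¹) : Matrix n n R).mulVec) h'
  rwa [Matrix.mulVec_mulVec, Matrix.mulVec_mulVec, ← Units.val_mul, inv_mul_cancel,
    Units.val_one, Matrix.one_mulVec, Matrix.one_mulVec] at h2

/-- The action of `GL₂(k)` (hence of `PGL₂(k)`, through which it factors) on the projective
line `ℙ¹(k̄)`, by projective linear transformations. -/
def pglAct (g : GL (Fin 2) k)
    (p : ℙ (AlgebraicClosure k) (Fin 2 → AlgebraicClosure k)) :
    ℙ (AlgebraicClosure k) (Fin 2 → AlgebraicClosure k) :=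
  Projectivization.map
    (Matrix.mulVecLin
      ((Matrix.GeneralLinearGroup.map (algebraMap k (AlgebraicClosure k)) g : _) :
        Matrix (Fin 2) (Fin 2) (AlgebraicClosure k)))
    (mulVecLin_injective_of_unit _)
    p

/-!
Three distinct points of `ℙ¹` can be moved to any three distinct points by an element of `GL₂`,
and an element of `GL₂` is determined up to a scalar by the images of three distinct points.
Hence a `G_k`-equivariant bijection `e : S ≃ S'` is induced by some `g ∈ GL₂(k̄)`, and for every
`σ ∈ G_k` the conjugate `σ(g)` induces `σ ∘ e ∘ σ⁻¹ = e` as well, so `σ(g) = c_σ g`. Dividing `g`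
by one of its nonzero entries makes it `G_k`-invariant; as `k` is perfect, `k̄/k` is Galois, so the
rescaled matrix has entries in `k`. Conversely, `PGL₂(k)` commutes with the Galois action.
-/

open Projectivization Matrix

namespace ProjectiveLine

variable (L : Type*) [Field L]

def infty : ℙ L (Fin 2 → L) := mk L ![1, 0] (by simp)

def zero : ℙ L (Fin 2 → L) := mk L ![0, 1] (by simp)

def one : ℙ L (Fin 2 → L) := mk L ![1, 1] (by simp)

variable {L}

lemma linearIndependent_rep_pair {p q : ℙ L (Fin 2 → L)} (h : p ≠ q) :
    LinearIndependent L ![p.rep, q.rep] := by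
  have hrep : Projectivization.rep ∘ ![p, q] = ![p.rep, q.rep] := by
    ext i : 1
    fin_cases i <;> rfl
  rw [← hrep]
  exact independent_iff.1 ((independent_pair_iff_ne p q).2 h)

lemma exists_smul_frame_eq {p₁ p₂ p₃ : ℙ L (Fin 2 → L)} (h₁₂ : p₁ ≠ p₂) (h₁₃ : p₁ ≠ p₃)
    (h₂₃ : p₂ ≠ p₃) :
    ∃ g : GL (Fin 2) L, g • infty L = p₁ ∧ g • zero L = p₂ ∧ g • one L = p₃ := by
  set M : Matrix (Fin 2) (Fin 2) L := (Matrix.of ![p₁.rep, p₂.rep])ᵀ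
  have hM : IsUnit M := linearIndependent_cols_iff_isUnit.1 (linearIndependent_rep_pair h₁₂)
  set w := M⁻¹ *ᵥ p₃.rep
  have hw : w 0 • p₁.rep + w 1 • p₂.rep = p₃.rep := by
    have hMw : M *ᵥ w = p₃.rep := by
      rw [mulVec_mulVec, mul_nonsing_inv _ ((isUnit_iff_isUnit_det M).1 hM), one_mulVec]
    rw [← hMw]
    ext i
    fin_cases i <;> simp [M, mulVec_fin_two] <;> ring
  have hw₀ : w 0 ≠ 0 := by
    intro h₀
    refine h₂₃.symm ?_
    rw [← p₂.mk_rep, ← p₃.mk_rep, mk_eq_mk_iff']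
    exact ⟨w 1, by simpa [h₀] using hw⟩
  have hw₁ : w 1 ≠ 0 := by
    intro h₁
    refine h₁₃.symm ?_
    rw [← p₁.mk_rep, ← p₃.mk_rep, mk_eq_mk_iff']
    exact ⟨w 0, by simpa [h₁] using hw⟩
  have hg : IsUnit (M * diagonal w) := by
    refine hM.mul (isUnit_diagonal.2 (Pi.isUnit_iff.2 fun i => ?_))
    fin_cases i <;> simp [hw₀, hw₁]
  -- `M * diagonal w` maps `![1, 0]`, `![0, 1]`, `![1, 1]` to `w 0 • p₁.rep`, `w 1 • p₂.rep`,
  -- and `p₃.rep`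
  refine ⟨hg.unit, ?_, ?_, ?_⟩
  · rw [infty, smul_mk, ← p₁.mk_rep, mk_eq_mk_iff']
    exact ⟨w 0, by ext i; fin_cases i <;> simp [M, mulVec_fin_two, mul_comm]⟩
  · rw [zero, smul_mk, ← p₂.mk_rep, mk_eq_mk_iff']
    exact ⟨w 1, by ext i; fin_cases i <;> simp [M, mulVec_fin_two, mul_comm]⟩
  · rw [one, smul_mk, ← p₃.mk_rep, mk_eq_mk_iff', ← hw]
    exact ⟨1, by ext i; fin_cases i <;> simp [M, mulVec_fin_two, mul_comm]⟩

lemma eq_smul_one_of_smul_frame_eq {g : GL (Fin 2) L} (hinfty : g • infty L = infty L)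
    (hzero : g • zero L = zero L) (hone : g • one L = one L) :
    ∃ c : L, (g : Matrix (Fin 2) (Fin 2) L) = c • 1 := by
  simp only [infty, zero, one, smul_mk, mk_eq_mk_iff', GeneralLinearGroup.fin_two_smul, smul_cons,
    smul_eq_mul, smul_empty, vecCons_inj, cons_val_zero, cons_val_one, mul_one, mul_zero,
    add_zero, zero_add, and_true] at hinfty hzero hone
  obtain ⟨a, ha₀, ha₁⟩ := hinfty
  obtain ⟨b, hb₀, hb₁⟩ := hzero
  obtain ⟨c, hc₀, hc₁⟩ := hone
  refine ⟨a, ?_⟩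
  ext i j
  fin_cases i <;> fin_cases j <;> simp <;> grind

theorem exists_smul_eq_of_pairwise_ne {p₁ p₂ p₃ q₁ q₂ q₃ : ℙ L (Fin 2 → L)}
    (h₁₂ : p₁ ≠ p₂) (h₁₃ : p₁ ≠ p₃) (h₂₃ : p₂ ≠ p₃)
    (h₁₂' : q₁ ≠ q₂) (h₁₃' : q₁ ≠ q₃) (h₂₃' : q₂ ≠ q₃) :
    ∃ g : GL (Fin 2) L, g • p₁ = q₁ ∧ g • p₂ = q₂ ∧ g • p₃ = q₃ := by
  obtain ⟨a, ha₁, ha₂, ha₃⟩ := exists_smul_frame_eq h₁₂ h₁₃ h₂₃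
  obtain ⟨b, hb₁, hb₂, hb₃⟩ := exists_smul_frame_eq h₁₂' h₁₃' h₂₃'
  refine ⟨b * a⁻¹, ?_, ?_, ?_⟩
  · rw [← ha₁, ← hb₁, mul_smul, inv_smul_smul]
  · rw [← ha₂, ← hb₂, mul_smul, inv_smul_smul]
  · rw [← ha₃, ← hb₃, mul_smul, inv_smul_smul]

theorem exists_eq_smul_of_smul_eq_smul {g g' : GL (Fin 2) L} {p₁ p₂ p₃ : ℙ L (Fin 2 → L)}
    (h₁₂ : p₁ ≠ p₂) (h₁₃ : p₁ ≠ p₃) (h₂₃ : p₂ ≠ p₃)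
    (e₁ : g • p₁ = g' • p₁) (e₂ : g • p₂ = g' • p₂) (e₃ : g • p₃ = g' • p₃) :
    ∃ c : L, (g : Matrix (Fin 2) (Fin 2) L) = c • (g' : Matrix (Fin 2) (Fin 2) L) := by
  obtain ⟨a, ha₁, ha₂, ha₃⟩ := exists_smul_frame_eq h₁₂ h₁₃ h₂₃
  have hfix : ∀ {x p : ℙ L (Fin 2 → L)}, a • x = p → g • p = g' • p →
      (a⁻¹ * g'⁻¹ * g * a) • x = x := by
    intro x p hx hp
    rw [mul_smul, mul_smul, mul_smul, hx, hp, inv_smul_smul, ← hx, inv_smul_smul]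
  obtain ⟨c, hc⟩ := eq_smul_one_of_smul_frame_eq (hfix ha₁ e₁) (hfix ha₂ e₂) (hfix ha₃ e₃)
  have hg : g = g' * a * (a⁻¹ * g'⁻¹ * g * a) * a⁻¹ := by group
  refine ⟨c, ?_⟩
  rw [hg, Units.val_mul, Units.val_mul, hc, Matrix.mul_smul, Matrix.mul_one, Matrix.smul_mul,
    ← Units.val_mul, mul_inv_cancel_right]

theorem smul_eq_smul_of_coe_eq_smul {n : Type*} [Fintype n] [DecidableEq n] {g g' : GL n L}
    {c : L} (hc : (g : Matrix n n L) = c • (g' : Matrix n n L)) (p : ℙ L (n → L)) :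
    g • p = g' • p := by
  induction p using Projectivization.ind with
  | h v hv =>
    rw [smul_mk, smul_mk, mk_eq_mk_iff']
    exact ⟨c, by rw [Units.smul_def, Units.smul_def, hc, smul_assoc]⟩

end ProjectiveLine

section GaloisDescent

variable {F K : Type*} [Field F] [Field K] [Algebra F K] [IsGalois F K]

theorem Matrix.exists_map_algebraMap_eq_smul {m n : Type*} {M : Matrix m n K} (hM : M ≠ 0)
    (h : ∀ σ : K ≃ₐ[F] K, ∃ c : K, M.map σ = c • M) :
    ∃ (N : Matrix m n F) (c : K), c ≠ 0 ∧ N.map (algebraMap F K) = c • M := by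
  obtain ⟨i, j, hij⟩ : ∃ i j, M i j ≠ 0 := by
    by_contra! h₀
    exact hM (Matrix.ext h₀)
  have hfixed : ∀ a b, (M i j)⁻¹ * M a b ∈ Set.range (algebraMap F K) := by
    intro a b
    refine (InfiniteGalois.mem_range_algebraMap_iff_fixed _).2 fun σ => ?_
    obtain ⟨c, hc⟩ := h σ
    have hσ : ∀ a b, σ (M a b) = c * M a b := fun a b => congrFun (congrFun hc a) b
    have hc₀ : c ≠ 0 := by
      rintro rfl
      simpa [hij] using hσ i j
    rw [map_mul, map_inv₀, hσ, hσ]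
    field_simp
  choose N hN using hfixed
  exact ⟨Matrix.of N, (M i j)⁻¹, inv_ne_zero hij, Matrix.ext fun a b => hN a b⟩

theorem Matrix.GeneralLinearGroup.exists_map_algebraMap_eq_smul {n : Type*} [Fintype n]
    [DecidableEq n] [Nonempty n] (g : GL n K)
    (h : ∀ σ : K ≃ₐ[F] K, ∃ c : K, (map (σ : K →+* K) g : Matrix n n K) = c • (g : Matrix n n K)) :
    ∃ (γ : GL n F) (c : K), (map (algebraMap F K) γ : Matrix n n K) = c • (g : Matrix n n K) := by
  obtain ⟨N, c, hc, hN⟩ := Matrix.exists_map_algebraMap_eq_smul g.ne_zero h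
  have hdet : N.det ≠ 0 := by
    rw [← (algebraMap F K).injective.ne_iff, map_zero, RingHom.map_det, RingHom.mapMatrix_apply,
      hN, det_smul]
    exact mul_ne_zero (pow_ne_zero _ hc) ((isUnit_iff_isUnit_det _).1 g.isUnit).ne_zero
  exact ⟨((isUnit_iff_isUnit_det N).2 hdet.isUnit).unit, c, hN⟩

end GaloisDescent

section GaloisAction

variable {F : Type*} [Field F]

local notation "F̄" => AlgebraicClosure F

local notation "ℙ¹" => ℙ F̄ (Fin 2 → F̄)

lemma galAct_galAct_symm (σ : F̄ ≃ₐ[F] F̄) (p : ℙ¹) : galAct F σ (galAct F σ.symm p) = p := by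
  induction p using Projectivization.ind with
  | h v hv => simp [galAct, galSemilinear, map_mk]

lemma galAct_smul (σ : F̄ ≃ₐ[F] F̄) (g : GL (Fin 2) F̄) (p : ℙ¹) :
    galAct F σ (g • p) = GeneralLinearGroup.map (σ : F̄ →+* F̄) g • galAct F σ p := by
  induction p using Projectivization.ind with
  | h v hv =>
    simp only [galAct, galSemilinear, map_mk, smul_mk]
    congr 1
    ext i
    exact RingHom.map_mulVec (σ : F̄ →+* F̄) _ v i

lemma galAct_pglAct (σ : F̄ ≃ₐ[F] F̄) (γ : GL (Fin 2) F) (p : ℙ¹) :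
    galAct F σ (pglAct F γ p) = pglAct F γ (galAct F σ p) := by
  have hγ : GeneralLinearGroup.map (σ : F̄ →+* F̄) (GeneralLinearGroup.map (algebraMap F F̄) γ) =
      GeneralLinearGroup.map (algebraMap F F̄) γ := by
    ext i j
    exact σ.commutes (γ i j)
  exact (galAct_smul σ _ p).trans (congrArg (· • galAct F σ p) hγ)

lemma map_smul_eq_smul_of_equivariant {S : Set ℙ¹}
    (hS : ∀ σ : F̄ ≃ₐ[F] F̄, ∀ p ∈ S, galAct F σ p ∈ S)
    (f : S → ℙ¹) (hf : ∀ σ p (hp : p ∈ S), f ⟨galAct F σ p, hS σ p hp⟩ = galAct F σ (f ⟨p, hp⟩))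
    {g : GL (Fin 2) F̄} (hg : ∀ p (hp : p ∈ S), g • p = f ⟨p, hp⟩) (σ : F̄ ≃ₐ[F] F̄)
    {p : ℙ¹} (hp : p ∈ S) : GeneralLinearGroup.map (σ : F̄ →+* F̄) g • p = g • p := by
  have hp' := hS σ.symm p hp
  calc GeneralLinearGroup.map (σ : F̄ →+* F̄) g • p
      = GeneralLinearGroup.map (σ : F̄ →+* F̄) g • galAct F σ (galAct F σ.symm p) := by
        rw [galAct_galAct_symm]
    _ = galAct F σ (f ⟨galAct F σ.symm p, hp'⟩) := by rw [← galAct_smul, hg _ hp']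
    _ = f ⟨galAct F σ (galAct F σ.symm p), hS σ _ hp'⟩ := (hf σ _ hp').symm
    _ = f ⟨p, hp⟩ := by simp only [galAct_galAct_symm]
    _ = g • p := (hg p hp).symm

end GaloisAction

theorem Set.image_eq_of_forall_eq_equiv {α β : Type*} {S : Set α} {S' : Set β} {f : α → β}
    (e : S ≃ S') (h : ∀ p (hp : p ∈ S), f p = e ⟨p, hp⟩) : f '' S = S' := by
  ext q
  constructor
  · rintro ⟨p, hp, rfl⟩
    rw [h p hp]
    exact (e ⟨p, hp⟩).2
  · intro hq
    refine ⟨e.symm ⟨q, hq⟩, (e.symm ⟨q, hq⟩).2, ?_⟩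
    simp [h _ (e.symm ⟨q, hq⟩).2]

section ThreePoints

variable {F : Type*} [Field F]

local notation "F̄" => AlgebraicClosure F

local notation "ℙ¹" => ℙ F̄ (Fin 2 → F̄)

theorem exists_equivariant_equiv_of_pglAct_image_eq {S S' : Set ℙ¹}
    (hS : ∀ σ : F̄ ≃ₐ[F] F̄, ∀ p ∈ S, galAct F σ p ∈ S) {γ : GL (Fin 2) F}
    (hγ : pglAct F γ '' S = S') :
    ∃ e : S ≃ S', ∀ (σ : F̄ ≃ₐ[F] F̄) (p : ℙ¹) (hp : p ∈ S),
      (e ⟨galAct F σ p, hS σ p hp⟩ : ℙ¹) = galAct F σ (e ⟨p, hp⟩) :=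
  ⟨(Equiv.Set.image (pglAct F γ) S
      (MulAction.injective (GeneralLinearGroup.map (algebraMap F F̄) γ))).trans
      (Equiv.setCongr hγ),
    fun σ p _ => (galAct_pglAct σ γ p).symm⟩

theorem exists_pglAct_image_eq_of_equivariant [PerfectField F] {S S' : Set ℙ¹}
    (hS : ∀ σ : F̄ ≃ₐ[F] F̄, ∀ p ∈ S, galAct F σ p ∈ S) (hcard : S.ncard = 3) (e : S ≃ S')
    (he : ∀ (σ : F̄ ≃ₐ[F] F̄) (p : ℙ¹) (hp : p ∈ S),
      (e ⟨galAct F σ p, hS σ p hp⟩ : ℙ¹) = galAct F σ (e ⟨p, hp⟩)) :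
    ∃ γ : GL (Fin 2) F, pglAct F γ '' S = S' := by
  obtain ⟨p₁, p₂, p₃, h₁₂, h₁₃, h₂₃, rfl⟩ := Set.ncard_eq_three.1 hcard
  have hne : ∀ {x y} (hx : x ∈ ({p₁, p₂, p₃} : Set ℙ¹)) (hy : y ∈ ({p₁, p₂, p₃} : Set ℙ¹)),
      x ≠ y → (e ⟨x, hx⟩ : ℙ¹) ≠ e ⟨y, hy⟩ :=
    fun _ _ hxy h => hxy (congrArg Subtype.val (e.injective (Subtype.ext h)))
  obtain ⟨g, hg₁, hg₂, hg₃⟩ := ProjectiveLine.exists_smul_eq_of_pairwise_ne h₁₂ h₁₃ h₂₃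
    (hne (by simp) (by simp) h₁₂) (hne (by simp) (by simp) h₁₃) (hne (by simp) (by simp) h₂₃)
  have hg : ∀ p (hp : p ∈ ({p₁, p₂, p₃} : Set ℙ¹)), g • p = e ⟨p, hp⟩ := by
    rintro p (rfl | rfl | rfl)
    exacts [hg₁, hg₂, hg₃]
  have hconj := map_smul_eq_smul_of_equivariant hS (fun x => e x) he hg
  obtain ⟨γ, c, hγ⟩ := GeneralLinearGroup.exists_map_algebraMap_eq_smul (F := F) g fun σ =>
    ProjectiveLine.exists_eq_smul_of_smul_eq_smul h₁₂ h₁₃ h₂₃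
      (hconj σ (by simp)) (hconj σ (by simp)) (hconj σ (by simp))
  refine ⟨γ, Set.image_eq_of_forall_eq_equiv e fun p hp => ?_⟩
  rw [← hg p hp]
  exact ProjectiveLine.smul_eq_smul_of_coe_eq_smul hγ p

end ThreePoints

theorem exists_pgl_map_iff_gal_equivariant_bijection
    (S S' : Set (ℙ (AlgebraicClosure k) (Fin 2 → AlgebraicClosure k)))
    (hS : ∀ (σ : AlgebraicClosure k ≃ₐ[k] AlgebraicClosure k), ∀ p ∈ S, galAct k σ p ∈ S)
    (hcardS : Nat.card S = 3) :
    (∃ γ : GL (Fin 2) k, pglAct k γ '' S = S') ↔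
    (∃ e : S ≃ S', ∀ (σ : AlgebraicClosure k ≃ₐ[k] AlgebraicClosure k)
        (p : ℙ (AlgebraicClosure k) (Fin 2 → AlgebraicClosure k)) (hp : p ∈ S),
        (e ⟨galAct k σ p, hS σ p hp⟩ : ℙ (AlgebraicClosure k) (Fin 2 → AlgebraicClosure k))
          = galAct k σ (e ⟨p, hp⟩)) := by
  rw [Nat.card_coe_set_eq] at hcardS
  exact ⟨fun ⟨_, hγ⟩ => exists_equivariant_equiv_of_pglAct_image_eq hS hγ,
    fun ⟨e, he⟩ => exists_pglAct_image_eq_of_equivariant hS hcardS e he⟩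

end
end

section
/- Let k be a field of characteristic 2 and w ∈ k. Let (a,b,c) ∈ k³ with (a,b,c) ≠ (0,0,0) and d ∈ k, and let (a′,b′,c′,d′) = (a,b,c,d)·M(w) (row vector times matrix). Then (a′,b′,c′) = (a,b,c) and d′ ≡ d (mod AS(k)) if and only if b = a and c = a(w + w²); in that case necessarily a ≠ 0 and moreover d′ = d exactly. -/
/-- The image of the Artin–Schreier map `x ↦ x + x²` of a field of characteristic 2,
as an additive subgroup. -/
def ASrange (k : Type*) [Field k] [CharP k 2] : AddSubgroup k where
  carrier := Set.range fun x : k => x + x ^ 2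
  zero_mem' := ⟨0, by ring⟩
  add_mem' := by
    rintro _ _ ⟨x, rfl⟩ ⟨y, rfl⟩
    refine ⟨x + y, ?_⟩
    have h2 : (2 : k) = 0 := by exact_mod_cast CharP.cast_eq_zero k 2
    linear_combination (x * y) * h2
  neg_mem' := by
    rintro _ ⟨x, rfl⟩
    refine ⟨x, ?_⟩
    have h2 : (2 : k) = 0 := by exact_mod_cast CharP.cast_eq_zero k 2
    linear_combination (x + x ^ 2) * h2

/-- The matrix `M(w)` from Lemma 3.8 (Lemma `mz`) of the paper. -/
def Mmat {k : Type*} [Field k] (w : k) : Matrix (Fin 4) (Fin 4) k :=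
  !![w^2 + w^3, 1 + w^3, 1 + w + w^5, w^2;
     1 + w + w^2, w^2, 1 + w^2 + w^4, w;
     1 + w, w, w^3, 1;
     0, 0, 0, 1]

/-- Let `k` be a field of characteristic 2 and `w ∈ k`.
Let `(a,b,c) ≠ (0,0,0)`, `d ∈ k`, and let `(a′,b′,c′,d′) = (a,b,c,d)·M(w)`.
Then `(a′,b′,c′) = (a,b,c)` and `d′ ≡ d (mod AS(k))` if and only if
`b = a` and `c = a(w + w²)`; in that case necessarily `a ≠ 0` and moreover `d′ = d`. -/
theorem vecMul_Mmat_fixed_iff {k : Type*} [Field k] [CharP k 2] (w a b c d : k)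
    (habc : (a, b, c) ≠ (0, 0, 0)) :
    ((Matrix.vecMul ![a, b, c, d] (Mmat w) 0,
      Matrix.vecMul ![a, b, c, d] (Mmat w) 1,
      Matrix.vecMul ![a, b, c, d] (Mmat w) 2) = (a, b, c) ∧
        Matrix.vecMul ![a, b, c, d] (Mmat w) 3 - d ∈ ASrange k
      ↔ b = a ∧ c = a * (w + w ^ 2)) ∧
    (b = a ∧ c = a * (w + w ^ 2) →
      a ≠ 0 ∧ Matrix.vecMul ![a, b, c, d] (Mmat w) 3 = d) := by
  have h2 : (2 : k) = 0 := by exact_mod_cast CharP.cast_eq_zero k 2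
  have he0 : Matrix.vecMul ![a, b, c, d] (Mmat w) 0
      = a * (w^2 + w^3) + b * (1 + w + w^2) + c * (1 + w) := by
    simp [Mmat, Matrix.vecMul, dotProduct, Fin.sum_univ_four]; try ring
  have he1 : Matrix.vecMul ![a, b, c, d] (Mmat w) 1
      = a * (1 + w^3) + b * w^2 + c * w := by
    simp [Mmat, Matrix.vecMul, dotProduct, Fin.sum_univ_four]; try ring
  have he2 : Matrix.vecMul ![a, b, c, d] (Mmat w) 2
      = a * (1 + w + w^5) + b * (1 + w^2 + w^4) + c * w^3 := by
    simp [Mmat, Matrix.vecMul, dotProduct, Fin.sum_univ_four]; try ring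
  have he3 : Matrix.vecMul ![a, b, c, d] (Mmat w) 3
      = a * w^2 + b * w + c + d := by
    simp [Mmat, Matrix.vecMul, dotProduct, Fin.sum_univ_four,
      Matrix.vecHead, Matrix.vecTail]; try ring
  have key : b = a ∧ c = a * (w + w ^ 2) →
      a ≠ 0 ∧ Matrix.vecMul ![a, b, c, d] (Mmat w) 3 = d := by
    rintro ⟨hb, hc⟩
    constructor
    · rintro rfl
      exact habc (by simp [hb, hc])
    · rw [he3]
      linear_combination w * hb + hc + (w * a + w^2 * a) * h2
  refine ⟨⟨?_, fun ⟨hb, hc⟩ => ?_⟩, key⟩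
  · rintro ⟨hfix, -⟩
    rw [Prod.mk.injEq, Prod.mk.injEq] at hfix
    obtain ⟨h0, h1, -⟩ := hfix
    rw [he0] at h0
    rw [he1] at h1
    have hb : b = a := by
      linear_combination w * h0 + (1 + w) * h1 +
        (b - a - w*c - w^2*c - w^2*b - w^3*b - w^3*a - w^4*a) * h2
    refine ⟨hb, ?_⟩
    linear_combination h0 + h1 + w * hb +
      (- (w*c) - w*b - w^2*b - w^2*a - w^3*a) * h2
  · constructor
    · rw [Prod.mk.injEq, Prod.mk.injEq, he0, he1, he2]
      refine ⟨?_, ?_, ?_⟩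
      · linear_combination (1 + w + w^2) * hb + (1 + w) * hc +
          (w*a + 2*w^2*a + w^3*a) * h2
      · linear_combination (w^2 - 1) * hb + w * hc + (w^2*a + w^3*a) * h2
      · linear_combination (1 + w^2 + w^4) * hb + (w^3 - 1) * hc +
          (a + w^4*a + w^5*a) * h2
    · rw [(key ⟨hb, hc⟩).2]
      simpa using (ASrange k).zero_mem
end

section
/- Let k be a field of characteristic 2, a ∈ k*, b, c ∈ k. Then Γ_{abc} is a subgroup of the affine group k* ⋊ k, and the map δ_{abc} : Γ_{abc} → k/AS(k) sending (λ,ν) to the class of aν⁵ + bν⁴ + cν³ modulo AS(k) is a group homomorphism. -/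
/-- The affine group `k* ⋊ k`: pairs `(λ, ν)` with multiplication
`(λ,ν)·(λ′,ν′) = (λλ′, λν′ + ν)`, i.e. composition of the affine maps `x ↦ λx + ν`. -/
@[ext]
structure Aff (k : Type*) [Field k] where
  fst : kˣ
  snd : k

namespace Aff

variable {k : Type*} [Field k]

instance : Mul (Aff k) := ⟨fun g h => ⟨g.fst * h.fst, (g.fst : k) * h.snd + g.snd⟩⟩
instance : One (Aff k) := ⟨⟨1, 0⟩⟩
instance : Inv (Aff k) := ⟨fun g => ⟨g.fst⁻¹, -((g.fst⁻¹ : k) * g.snd)⟩⟩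

@[simp] theorem mul_fst (g h : Aff k) : (g * h).fst = g.fst * h.fst := rfl
@[simp] theorem mul_snd (g h : Aff k) : (g * h).snd = (g.fst : k) * h.snd + g.snd := rfl
@[simp] theorem one_fst : (1 : Aff k).fst = 1 := rfl
@[simp] theorem one_snd : (1 : Aff k).snd = 0 := rfl
@[simp] theorem inv_fst (g : Aff k) : (g⁻¹).fst = g.fst⁻¹ := rfl
@[simp] theorem inv_snd (g : Aff k) : (g⁻¹).snd = -((g.fst⁻¹ : k) * g.snd) := rfl

instance : Group (Aff k) where
  mul_assoc a b c := by
    ext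
    · simp [mul_assoc]
    · simp; ring
  one_mul a := by ext <;> simp
  mul_one a := by ext <;> simp
  inv_mul_cancel a := by
    ext
    · simp
    · have h : (a.fst : k) ≠ 0 := Units.ne_zero _
      first | (simp; done) | (simp; field_simp) | field_simp

end Aff

/-- The additive polynomial `E_{a,c}(x) = a⁴x¹⁶ + c⁴x⁸ + c²x² + ax`. -/
def Efun {k : Type*} [Field k] (a c x : k) : k :=
  a ^ 4 * x ^ 16 + c ^ 4 * x ^ 8 + c ^ 2 * x ^ 2 + a * x

open scoped Classical

/-- The subset `Γ_{abc}` of the affine group `k* ⋊ k`: for `c ≠ 0` it is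
`{(1,ν) : E_{a,c}(ν) = 0}`, and for `c = 0` it is `{(λ,ν) : λ⁵ = 1, E_{a,c}(ν) = b(1+λ)}`. -/
def GammaSet {k : Type*} [Field k] (a : kˣ) (b c : k) : Set (Aff k) :=
  {g | if c = 0 then ((g.fst : k) ^ 5 = 1 ∧ Efun (a : k) c g.snd = b * (1 + (g.fst : k)))
       else (g.fst = 1 ∧ Efun (a : k) c g.snd = 0)}

/-- The map `δ_{abc} : Γ_{abc} → k/AS(k)`, `(λ,ν) ↦ aν⁵ + bν⁴ + cν³ mod AS(k)`. -/
def deltaMap {k : Type*} [Field k] [CharP k 2] (a : kˣ) (b c : k) (g : Aff k) :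
    k ⧸ ASrange k :=
  QuotientAddGroup.mk ((a : k) * g.snd ^ 5 + b * g.snd ^ 4 + c * g.snd ^ 3)

/-- Let `k` be a field of characteristic 2, `a ∈ k*`, `b, c ∈ k`.
Then `Γ_{abc}` is a subgroup of the affine group `k* ⋊ k`, and the map
`δ_{abc} : Γ_{abc} → k/AS(k)`, `(λ,ν) ↦ aν⁵ + bν⁴ + cν³ mod AS(k)`,
is a group homomorphism. -/
theorem gammaSet_subgroup_and_delta_hom
    {k : Type*} [Field k] [CharP k 2] (a : kˣ) (b c : k) :
    (∃ H : Subgroup (Aff k), (H : Set (Aff k)) = GammaSet a b c) ∧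
    (∀ g h : Aff k, g ∈ GammaSet a b c → h ∈ GammaSet a b c →
      deltaMap a b c (g * h) = deltaMap a b c g + deltaMap a b c h) := by
  have h2 : (2 : k) = 0 := by exact_mod_cast CharP.cast_eq_zero k 2
  constructor
  · refine ⟨{ carrier := GammaSet a b c, one_mem' := ?_, mul_mem' := ?_, inv_mem' := ?_ }, rfl⟩
    case left.refine_1 =>
      intro g h hg hh
      by_cases hc : c = 0
      · subst hc
        simp only [GammaSet, Set.mem_setOf_eq, eq_self_iff_true, if_true, Efun] at hg hh ⊢
        obtain ⟨hl, hn⟩ := hg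
        obtain ⟨hL, hm⟩ := hh
        simp only [Aff.mul_fst, Aff.mul_snd, Units.val_mul]
        constructor
        · rw [mul_pow, hl, hL, one_mul]
        · linear_combination (hn + (g.fst:k) * hm + ((a:k)^4*(g.fst:k)*h.snd^16 + (a:k)^4*(g.fst:k)^6*h.snd^16 + (a:k)^4*(g.fst:k)^11*h.snd^16) * hl + (b*(g.fst:k) + 8*(a:k)^4*(g.fst:k)*g.snd^15*h.snd + 60*(a:k)^4*(g.fst:k)^2*g.snd^14*h.snd^2 + 280*(a:k)^4*(g.fst:k)^3*g.snd^13*h.snd^3 + 910*(a:k)^4*(g.fst:k)^4*g.snd^12*h.snd^4 + 2184*(a:k)^4*(g.fst:k)^5*g.snd^11*h.snd^5 + 4004*(a:k)^4*(g.fst:k)^6*g.snd^10*h.snd^6 + 5720*(a:k)^4*(g.fst:k)^7*g.snd^9*h.snd^7 + 6435*(a:k)^4*(g.fst:k)^8*g.snd^8*h.snd^8 + 5720*(a:k)^4*(g.fst:k)^9*g.snd^7*h.snd^9 + 4004*(a:k)^4*(g.fst:k)^10*g.snd^6*h.snd^10 + 2184*(a:k)^4*(g.fst:k)^11*g.snd^5*h.snd^11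 + 910*(a:k)^4*(g.fst:k)^12*g.snd^4*h.snd^12 + 280*(a:k)^4*(g.fst:k)^13*g.snd^3*h.snd^13 + 60*(a:k)^4*(g.fst:k)^14*g.snd^2*h.snd^14 + 8*(a:k)^4*(g.fst:k)^15*g.snd*h.snd^15) * h2)
      · simp only [GammaSet, Set.mem_setOf_eq, hc, if_false, Efun] at hg hh ⊢
        obtain ⟨hl, hn⟩ := hg
        obtain ⟨hL, hm⟩ := hh
        simp only [Aff.mul_fst, Aff.mul_snd, hl, hL, Units.val_one, one_mul, mul_one]
        refine ⟨trivial, ?_⟩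
        linear_combination (hn + hm + (c^2*g.snd*h.snd + 4*c^4*g.snd*h.snd^7 + 14*c^4*g.snd^2*h.snd^6 + 28*c^4*g.snd^3*h.snd^5 + 35*c^4*g.snd^4*h.snd^4 + 28*c^4*g.snd^5*h.snd^3 + 14*c^4*g.snd^6*h.snd^2 + 4*c^4*g.snd^7*h.snd + 8*(a:k)^4*g.snd*h.snd^15 + 60*(a:k)^4*g.snd^2*h.snd^14 + 280*(a:k)^4*g.snd^3*h.snd^13 + 910*(a:k)^4*g.snd^4*h.snd^12 + 2184*(a:k)^4*g.snd^5*h.snd^11 + 4004*(a:k)^4*g.snd^6*h.snd^10 + 5720*(a:k)^4*g.snd^7*h.snd^9 + 6435*(a:k)^4*g.snd^8*h.snd^8 + 5720*(a:k)^4*g.snd^9*h.snd^7 + 4004*(a:k)^4*g.snd^10*h.snd^6 + 2184*(a:k)^4*g.snd^11*h.snd^5 + 910*(a:k)^4*g.snd^12*h.snd^4 + 280*(a:k)^4*g.snd^13*h.snd^3 + 60*(a:k)^4*g.snd^14*h.snd^2 + 8*(a:k)^4*g.snd^15*h.snd) * h2)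
    case left.refine_2 =>
      by_cases hc : c = 0
      · subst hc
        simp only [GammaSet, Set.mem_setOf_eq, eq_self_iff_true, if_true, Aff.one_fst,
          Aff.one_snd, Units.val_one, one_pow, Efun]
        refine ⟨trivial, ?_⟩
        linear_combination (-b) * h2
      · simp only [GammaSet, Set.mem_setOf_eq, hc, if_false, Aff.one_fst, Aff.one_snd, Efun]
        exact ⟨trivial, by ring⟩
    case left.refine_3 =>
      intro g hg
      by_cases hc : c = 0
      · subst hc
        simp only [GammaSet, Set.mem_setOf_eq, eq_self_iff_true, if_true, Efun] at hg ⊢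
        obtain ⟨hl, hn⟩ := hg
        have hinv : ((g.fst : k))⁻¹ = (g.fst : k) ^ 4 := by
          refine inv_eq_of_mul_eq_one_right ?_
          linear_combination hl
        simp only [Aff.inv_fst, Aff.inv_snd, Units.val_inv_eq_inv_val, hinv, CharTwo.neg_eq]
        constructor
        · linear_combination ((g.fst:k)^15 + (g.fst:k)^10 + (g.fst:k)^5 + 1) * hl
        · linear_combination ((g.fst:k)^4 * hn + (b + (a:k)^4*(g.fst:k)^4*g.snd^16 + (a:k)^4*(g.fst:k)^9*g.snd^16 + (a:k)^4*(g.fst:k)^14*g.snd^16 + (a:k)^4*(g.fst:k)^19*g.snd^16 + (a:k)^4*(g.fst:k)^24*g.snd^16 + (a:k)^4*(g.fst:k)^29*g.snd^16 + (a:k)^4*(g.fst:k)^34*g.snd^16 + (a:k)^4*(g.fst:k)^39*g.snd^16 + (a:k)^4*(g.fst:k)^44*g.snd^16 + (a:k)^4*(g.fst:k)^49*g.snd^16 + (a:k)^4*(g.fst:k)^54*g.snd^16 + (a:k)^4*(g.fst:k)^59*g.snd^16) * hl + (0) * h2)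
      · simp only [GammaSet, Set.mem_setOf_eq, hc, if_false, Efun] at hg ⊢
        obtain ⟨hl, hn⟩ := hg
        simp only [Aff.inv_fst, Aff.inv_snd, hl, inv_one, Units.val_one, one_mul,
          CharTwo.neg_eq]
        exact ⟨trivial, hn⟩
  · -- delta hom
    intro g h hg hh
    unfold deltaMap
    rw [← QuotientAddGroup.mk_add, QuotientAddGroup.eq]
    simp only [Aff.mul_snd]
    by_cases hc : c = 0
    · subst hc
      simp only [GammaSet, Set.mem_setOf_eq, eq_self_iff_true, if_true, Efun] at hg hh
      obtain ⟨hl, hn⟩ := hg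
      obtain ⟨hL, hm⟩ := hh
      refine ⟨((a:k)*(g.fst:k)*g.snd^4*h.snd + (a:k)^2*(g.fst:k)^2*g.snd^8*h.snd^2), ?_⟩
      linear_combination ((-((g.fst:k)^4*h.snd^4)) * hn + (b*h.snd^4 + (a:k)*h.snd^5) * hl + (2*b*(g.fst:k)*g.snd^3*h.snd + 3*b*(g.fst:k)^2*g.snd^2*h.snd^2 + 2*b*(g.fst:k)^3*g.snd*h.snd^3 + (-1:k)*b*(g.fst:k)^5*h.snd^4 + 3*(a:k)*(g.fst:k)*g.snd^4*h.snd + 5*(a:k)*(g.fst:k)^2*g.snd^3*h.snd^2 + 5*(a:k)*(g.fst:k)^3*g.snd^2*h.snd^3 + 3*(a:k)*(g.fst:k)^4*g.snd*h.snd^4 + (a:k)^2*(g.fst:k)^2*g.snd^8*h.snd^2 + (a:k)^3*(g.fst:k)^3*g.snd^12*h.snd^3 + (a:k)^4*(g.fst:k)^4*g.snd^16*h.snd^4) * h2)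
    · simp only [GammaSet, Set.mem_setOf_eq, hc, if_false, Efun] at hg hh
      obtain ⟨hl, hn⟩ := hg
      obtain ⟨hL, hm⟩ := hh
      have hg1 : (g.fst : k) = 1 := by rw [hl, Units.val_one]
      rw [hg1, one_mul]
      refine ⟨(c*g.snd*h.snd^2 + c*g.snd^2*h.snd + c^2*g.snd^2*h.snd^4 + (a:k)*g.snd*h.snd^4 + (a:k)^2*g.snd^2*h.snd^8), ?_⟩
      linear_combination (g.snd^4 * hm + (2*c*g.snd*h.snd^2 + 2*c*g.snd^2*h.snd + c^2*g.snd^2*h.snd^4 + c^2*g.snd^3*h.snd^3 + c^3*g.snd^3*h.snd^6 + c^3*g.snd^4*h.snd^5 + 2*b*g.snd*h.snd^3 + 3*b*g.snd^2*h.snd^2 + 2*b*g.snd^3*h.snd + 3*(a:k)*g.snd*h.snd^4 + 5*(a:k)*g.snd^2*h.snd^3 + 5*(a:k)*g.snd^3*h.snd^2 + 2*(a:k)*g.snd^4*h.snd + (a:k)*c*g.snd^2*h.snd^6 + (a:k)*c*g.snd^3*h.snd^5 + (a:k)*c^2*g.snd^3*h.snd^8 + (a:k)^2*g.snd^2*h.snd^8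 + (a:k)^2*c*g.snd^3*h.snd^10 + (a:k)^2*c*g.snd^4*h.snd^9 + (a:k)^2*c^2*g.snd^4*h.snd^12 + (a:k)^3*g.snd^3*h.snd^12) * h2)
end

section
/- Let q = 2^m and k = 𝔽_q. Let N = k* × k* × k* × (k/AS(k)) and consider the two bijections of N given by τ(a,b,c,d) = (a, c, b, d + ā) and σ(a,b,c,d) = (b, c, a, d + c̄ + b̄), where x̄ denotes the class of x in k/AS(k). Then τ² = σ³ = (τσ)² = id, so τ and σ define an action of the symmetric group S₃ on N, and the number of orbits of this action is q(q−1)(2q−1)/6. -/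
variable {k : Type*} [Field k] [CharP k 2]

/-- The involution `τ(a,b,c,d) = (a, c, b, d + ā)` of `N = k* × k* × k* × (k/AS(k))`. -/
def tauN (n : kˣ × kˣ × kˣ × (k ⧸ ASrange k)) : kˣ × kˣ × kˣ × (k ⧸ ASrange k) :=
  (n.1, n.2.2.1, n.2.1, n.2.2.2 + QuotientAddGroup.mk (n.1 : k))

/-- The 3-cycle `σ(a,b,c,d) = (b, c, a, d + c̄ + b̄)` of `N = k* × k* × k* × (k/AS(k))`. -/
def sigmaN (n : kˣ × kˣ × kˣ × (k ⧸ ASrange k)) : kˣ × kˣ × kˣ × (k ⧸ ASrange k) :=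
  (n.2.1, n.2.2.1, n.1,
    n.2.2.2 + QuotientAddGroup.mk (n.2.2.1 : k) + QuotientAddGroup.mk (n.2.1 : k))

/-! ### Auxiliary setup: an action of `S₃ = Perm (Fin 3)` -/

abbrev NN (k : Type*) [Field k] [CharP k 2] := kˣ × kˣ × kˣ × (k ⧸ ASrange k)

lemma two_eq_zero : (2 : k) = 0 := by exact_mod_cast CharP.cast_eq_zero k 2

/-- The twisting cocycle, given by summing `v` over "co-inversions" of `g`. -/
def twist (g : Equiv.Perm (Fin 3)) (v : Fin 3 → kˣ) : k :=
  (if g 1 < g 0 then (v 2 : k) else 0) + (if g 2 < g 0 then (v 1 : k) else 0) +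
    (if g 2 < g 1 then (v 0 : k) else 0)

def vecN (n : NN k) : Fin 3 → kˣ := ![n.1, n.2.1, n.2.2.1]

def permN (g : Equiv.Perm (Fin 3)) (n : NN k) : NN k :=
  (vecN n (g⁻¹ 0), vecN n (g⁻¹ 1), vecN n (g⁻¹ 2),
    n.2.2.2 + QuotientAddGroup.mk (twist g (vecN n)))

lemma vecN_permN (g : Equiv.Perm (Fin 3)) (n : NN k) :
    vecN (permN g n) = fun i => vecN n (g⁻¹ i) := by
  funext i
  fin_cases i <;> rfl

open Equiv in
lemma perm3_cases (g : Equiv.Perm (Fin 3)) :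
    g = 1 ∨ g = swap 0 1 ∨ g = swap 0 2 ∨ g = swap 1 2 ∨
      g = finRotate 3 ∨ g = (finRotate 3)⁻¹ := by revert g; decide

open Equiv in
lemma permN_one (n : NN k) : permN 1 n = n := by
  obtain ⟨a, b, c, d⟩ := n
  simp only [permN, twist]
  rw [if_neg (by decide), if_neg (by decide), if_neg (by decide)]
  simp [vecN]

open Equiv in
lemma permN_t (n : NN k) : permN (swap 1 2) n = tauN n := by
  obtain ⟨a, b, c, d⟩ := n
  simp only [permN, twist]
  rw [if_neg (by decide), if_neg (by decide), if_pos (by decide)]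
  have h0 : (swap 1 2 : Perm (Fin 3))⁻¹ 0 = 0 := by decide
  have h1 : (swap 1 2 : Perm (Fin 3))⁻¹ 1 = 2 := by decide
  have h2 : (swap 1 2 : Perm (Fin 3))⁻¹ 2 = 1 := by decide
  rw [h0, h1, h2]
  simp [vecN, tauN]

open Equiv in
lemma permN_s (n : NN k) : permN (finRotate 3)⁻¹ n = sigmaN n := by
  obtain ⟨a, b, c, d⟩ := n
  simp only [permN, twist]
  rw [if_pos (by decide), if_pos (by decide), if_neg (by decide)]
  have h0 : ((finRotate 3 : Perm (Fin 3))⁻¹)⁻¹ 0 = 1 := by decide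
  have h1 : ((finRotate 3 : Perm (Fin 3))⁻¹)⁻¹ 1 = 2 := by decide
  have h2 : ((finRotate 3 : Perm (Fin 3))⁻¹)⁻¹ 2 = 0 := by decide
  rw [h0, h1, h2]
  simp [vecN, sigmaN]
  rw [add_assoc, ← QuotientAddGroup.mk_add]

open Equiv in
lemma permN_s01 (n : NN k) :
    permN (swap 0 1) n = (n.2.1, n.1, n.2.2.1, n.2.2.2 + QuotientAddGroup.mk (n.2.2.1 : k)) := by
  obtain ⟨a, b, c, d⟩ := n
  simp only [permN, twist]
  rw [if_pos (by decide), if_neg (by decide), if_neg (by decide)]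
  have h0 : (swap 0 1 : Perm (Fin 3))⁻¹ 0 = 1 := by decide
  have h1 : (swap 0 1 : Perm (Fin 3))⁻¹ 1 = 0 := by decide
  have h2 : (swap 0 1 : Perm (Fin 3))⁻¹ 2 = 2 := by decide
  rw [h0, h1, h2]
  simp [vecN]

open Equiv in
lemma permN_s02 (n : NN k) :
    permN (swap 0 2) n = (n.2.2.1, n.2.1, n.1,
      n.2.2.2 + QuotientAddGroup.mk ((n.2.2.1 : k) + (n.2.1 : k) + (n.1 : k))) := by
  obtain ⟨a, b, c, d⟩ := n
  simp only [permN, twist]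
  rw [if_pos (by decide), if_pos (by decide), if_pos (by decide)]
  have h0 : (swap 0 2 : Perm (Fin 3))⁻¹ 0 = 2 := by decide
  have h1 : (swap 0 2 : Perm (Fin 3))⁻¹ 1 = 1 := by decide
  have h2 : (swap 0 2 : Perm (Fin 3))⁻¹ 2 = 0 := by decide
  rw [h0, h1, h2]
  simp [vecN]

open Equiv in
lemma permN_r (n : NN k) :
    permN (finRotate 3) n = (n.2.2.1, n.1, n.2.1,
      n.2.2.2 + QuotientAddGroup.mk ((n.2.1 : k) + (n.1 : k))) := by
  obtain ⟨a, b, c, d⟩ := n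
  simp only [permN, twist]
  rw [if_neg (by decide), if_pos (by decide), if_pos (by decide)]
  have h0 : (finRotate 3 : Perm (Fin 3))⁻¹ 0 = 2 := by decide
  have h1 : (finRotate 3 : Perm (Fin 3))⁻¹ 1 = 0 := by decide
  have h2 : (finRotate 3 : Perm (Fin 3))⁻¹ 2 = 1 := by decide
  rw [h0, h1, h2]
  simp [vecN]
@[simp] lemma pe0 : (Equiv.swap 0 1 : Equiv.Perm (Fin 3)) 0 = 1 := by decide
@[simp] lemma pe1 : (Equiv.swap 0 1 : Equiv.Perm (Fin 3))⁻¹ 0 = 1 := by decide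
@[simp] lemma pe2 : (Equiv.swap 0 1 : Equiv.Perm (Fin 3)) 1 = 0 := by decide
@[simp] lemma pe3 : (Equiv.swap 0 1 : Equiv.Perm (Fin 3))⁻¹ 1 = 0 := by decide
@[simp] lemma pe4 : (Equiv.swap 0 1 : Equiv.Perm (Fin 3)) 2 = 2 := by decide
@[simp] lemma pe5 : (Equiv.swap 0 1 : Equiv.Perm (Fin 3))⁻¹ 2 = 2 := by decide
@[simp] lemma pe6 : (Equiv.swap 0 2 : Equiv.Perm (Fin 3)) 0 = 2 := by decide
@[simp] lemma pe7 : (Equiv.swap 0 2 : Equiv.Perm (Fin 3))⁻¹ 0 = 2 := by decide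
@[simp] lemma pe8 : (Equiv.swap 0 2 : Equiv.Perm (Fin 3)) 1 = 1 := by decide
@[simp] lemma pe9 : (Equiv.swap 0 2 : Equiv.Perm (Fin 3))⁻¹ 1 = 1 := by decide
@[simp] lemma pe10 : (Equiv.swap 0 2 : Equiv.Perm (Fin 3)) 2 = 0 := by decide
@[simp] lemma pe11 : (Equiv.swap 0 2 : Equiv.Perm (Fin 3))⁻¹ 2 = 0 := by decide
@[simp] lemma pe12 : (Equiv.swap 1 2 : Equiv.Perm (Fin 3)) 0 = 0 := by decide
@[simp] lemma pe13 : (Equiv.swap 1 2 : Equiv.Perm (Fin 3))⁻¹ 0 = 0 := by decide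
@[simp] lemma pe14 : (Equiv.swap 1 2 : Equiv.Perm (Fin 3)) 1 = 2 := by decide
@[simp] lemma pe15 : (Equiv.swap 1 2 : Equiv.Perm (Fin 3))⁻¹ 1 = 2 := by decide
@[simp] lemma pe16 : (Equiv.swap 1 2 : Equiv.Perm (Fin 3)) 2 = 1 := by decide
@[simp] lemma pe17 : (Equiv.swap 1 2 : Equiv.Perm (Fin 3))⁻¹ 2 = 1 := by decide
@[simp] lemma pe18 : (finRotate 3 : Equiv.Perm (Fin 3)) 0 = 1 := by decide
@[simp] lemma pe19 : (finRotate 3 : Equiv.Perm (Fin 3))⁻¹ 0 = 2 := by decide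
@[simp] lemma pe20 : (finRotate 3 : Equiv.Perm (Fin 3)) 1 = 2 := by decide
@[simp] lemma pe21 : (finRotate 3 : Equiv.Perm (Fin 3))⁻¹ 1 = 0 := by decide
@[simp] lemma pe22 : (finRotate 3 : Equiv.Perm (Fin 3)) 2 = 0 := by decide
@[simp] lemma pe23 : (finRotate 3 : Equiv.Perm (Fin 3))⁻¹ 2 = 1 := by decide
@[simp] lemma pe24 : ((finRotate 3)⁻¹ : Equiv.Perm (Fin 3)) 0 = 2 := by decide
@[simp] lemma pe25 : ((finRotate 3)⁻¹ : Equiv.Perm (Fin 3))⁻¹ 0 = 1 := by decide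
@[simp] lemma pe26 : ((finRotate 3)⁻¹ : Equiv.Perm (Fin 3)) 1 = 0 := by decide
@[simp] lemma pe27 : ((finRotate 3)⁻¹ : Equiv.Perm (Fin 3))⁻¹ 1 = 2 := by decide
@[simp] lemma pe28 : ((finRotate 3)⁻¹ : Equiv.Perm (Fin 3)) 2 = 1 := by decide
@[simp] lemma pe29 : ((finRotate 3)⁻¹ : Equiv.Perm (Fin 3))⁻¹ 2 = 0 := by decide

set_option maxHeartbeats 1000000 in
lemma twist_mul (g h : Equiv.Perm (Fin 3)) (v : Fin 3 → kˣ) :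
    twist (g * h) v = twist h v + twist g (fun i => v (h⁻¹ i)) := by
  have h2 : (2:k) = 0 := two_eq_zero
  rcases perm3_cases g with rfl|rfl|rfl|rfl|rfl|rfl <;>
    rcases perm3_cases h with rfl|rfl|rfl|rfl|rfl|rfl <;>
    · simp (config := { decide := true }) only [twist, Equiv.Perm.mul_apply,
        Equiv.Perm.one_apply, inv_one, pe0, pe1, pe2, pe3, pe4, pe5, pe6, pe7, pe8, pe9,
        pe10, pe11, pe12, pe13, pe14, pe15, pe16, pe17, pe18, pe19, pe20, pe21,
        pe22, pe23, pe24, pe25, pe26, pe27, pe28, pe29, if_true, if_false]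
      first
      | ring1
      | linear_combination (v 0 : k) * h2
      | linear_combination (-(v 0 : k)) * h2
      | linear_combination (v 1 : k) * h2
      | linear_combination (-(v 1 : k)) * h2
      | linear_combination (v 2 : k) * h2
      | linear_combination (-(v 2 : k)) * h2
      | linear_combination ((v 0 : k) + v 1) * h2
      | linear_combination (-((v 0 : k) + v 1)) * h2
      | linear_combination ((v 0 : k) + v 2) * h2
      | linear_combination (-((v 0 : k) + v 2)) * h2
      | linear_combination ((v 1 : k) + v 2) * h2
      | linear_combination (-((v 1 : k) + v 2)) * h2
      | linear_combination ((v 0 : k) + v 1 + v 2) * h2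
      | linear_combination (-((v 0 : k) + v 1 + v 2)) * h2

lemma permN_mul (g h : Equiv.Perm (Fin 3)) (n : NN k) :
    permN (g * h) n = permN g (permN h n) := by
  have hc : ∀ i, vecN n ((g * h)⁻¹ i) = vecN (permN h n) (g⁻¹ i) := by
    intro i
    rw [vecN_permN]
    simp [mul_inv_rev]
  have hd : n.2.2.2 + QuotientAddGroup.mk (twist (g * h) (vecN n)) =
      (permN h n).2.2.2 + QuotientAddGroup.mk (twist g (vecN (permN h n))) := by
    show _ = n.2.2.2 + QuotientAddGroup.mk (twist h (vecN n)) + _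
    rw [vecN_permN, twist_mul, QuotientAddGroup.mk_add, add_assoc]
  show (_, _, _, _) = (_, _, _, _)
  rw [hc 0, hc 1, hc 2, hd]

instance : SMul (Equiv.Perm (Fin 3)) (NN k) := ⟨permN⟩

lemma smul_def' (g : Equiv.Perm (Fin 3)) (n : NN k) : g • n = permN g n := rfl

instance : MulAction (Equiv.Perm (Fin 3)) (NN k) where
  one_smul := permN_one
  mul_smul := permN_mul

/-- The relation from the theorem statement. -/
def relN (n n' : NN k) : Prop := n' = tauN n ∨ n' = sigmaN n

lemma mk_tau (n : NN k) : Quot.mk relN (tauN n) = Quot.mk relN n :=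
  (Quot.sound (show relN n (tauN n) from Or.inl rfl)).symm

lemma mk_sigma (n : NN k) : Quot.mk relN (sigmaN n) = Quot.mk relN n :=
  (Quot.sound (show relN n (sigmaN n) from Or.inr rfl)).symm

open Equiv in
lemma mk_smul (g : Equiv.Perm (Fin 3)) (n : NN k) :
    Quot.mk relN (g • n) = Quot.mk relN n := by
  rw [smul_def']
  rcases perm3_cases g with rfl | rfl | rfl | rfl | rfl | rfl
  · rw [permN_one]
  · rw [show (swap 0 1 : Perm (Fin 3)) = swap 1 2 * (finRotate 3)⁻¹ from by decide,
      permN_mul, permN_s, permN_t, mk_tau, mk_sigma]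
  · rw [show (swap 0 2 : Perm (Fin 3)) = (finRotate 3)⁻¹ * swap 1 2 from by decide,
      permN_mul, permN_t, permN_s, mk_sigma, mk_tau]
  · rw [permN_t, mk_tau]
  · rw [show (finRotate 3 : Perm (Fin 3)) = (finRotate 3)⁻¹ * (finRotate 3)⁻¹ from by decide,
      permN_mul, permN_s, permN_s, mk_sigma, mk_sigma]
  · rw [permN_s, mk_sigma]

lemma orbit_mk (g : Equiv.Perm (Fin 3)) (n : NN k) :
    (⟦g • n⟧ : Quotient (MulAction.orbitRel (Equiv.Perm (Fin 3)) (NN k))) = ⟦n⟧ :=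
  Quotient.sound ((MulAction.orbitRel_apply).mpr (MulAction.mem_orbit n g))

noncomputable def quotEquiv :
    Quot (relN (k := k)) ≃ Quotient (MulAction.orbitRel (Equiv.Perm (Fin 3)) (NN k)) where
  toFun := Quot.lift (fun n => ⟦n⟧) <| by
    rintro a b (rfl | rfl)
    · rw [← permN_t, ← smul_def']
      exact (orbit_mk _ a).symm
    · rw [← permN_s, ← smul_def']
      exact (orbit_mk _ a).symm
  invFun := Quotient.lift (Quot.mk relN) <| by
    intro a b hab
    obtain ⟨g, hg⟩ := (MulAction.orbitRel_apply).mp hab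
    rw [← hg, mk_smul]
  left_inv := by
    intro q
    induction q using Quot.inductionOn with
    | _ n => rfl
  right_inv := by
    intro q
    induction q using Quotient.inductionOn with
    | _ n => rfl

/-! ### Fixed point characterizations -/

open Equiv MulAction in
lemma fix_t_iff (n : NN k) :
    permN (swap 1 2) n = n ↔ ((n.1 : k) ∈ ASrange k ∧ n.2.2.1 = n.2.1) := by
  rw [permN_t]
  obtain ⟨a, b, c, d⟩ := n
  simp only [tauN, Prod.mk.injEq, true_and]
  constructor
  · rintro ⟨h1, h2, h3⟩
    rw [add_eq_left] at h3
    exact ⟨(QuotientAddGroup.eq_zero_iff _).mp h3, h1⟩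
  · rintro ⟨h1, h2⟩
    exact ⟨h2, h2.symm, by rw [add_eq_left]; exact (QuotientAddGroup.eq_zero_iff _).mpr h1⟩

open Equiv MulAction in
lemma fix_s01_iff (n : NN k) :
    permN (swap 0 1) n = n ↔ ((n.2.2.1 : k) ∈ ASrange k ∧ n.2.1 = n.1) := by
  rw [permN_s01]
  obtain ⟨a, b, c, d⟩ := n
  simp only [Prod.mk.injEq, true_and]
  constructor
  · rintro ⟨h1, h2, h3⟩
    rw [add_eq_left] at h3
    exact ⟨(QuotientAddGroup.eq_zero_iff _).mp h3, h1⟩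
  · rintro ⟨h1, h2⟩
    exact ⟨h2, h2.symm, by rw [add_eq_left]; exact (QuotientAddGroup.eq_zero_iff _).mpr h1⟩

open Equiv MulAction in
lemma fix_s02_iff (n : NN k) :
    permN (swap 0 2) n = n ↔ ((n.2.1 : k) ∈ ASrange k ∧ n.2.2.1 = n.1) := by
  rw [permN_s02]
  obtain ⟨a, b, c, d⟩ := n
  have h2 : (2 : k) = 0 := two_eq_zero
  simp only [Prod.mk.injEq, true_and]
  constructor
  · rintro ⟨hc, -, hd⟩
    rw [add_eq_left] at hd
    have hck : (c : k) = a := by rw [hc]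
    have key : ((c : k) + b + a) = b := by rw [hck]; linear_combination (a : k) * h2
    rw [key] at hd
    exact ⟨(QuotientAddGroup.eq_zero_iff _).mp hd, hc⟩
  · rintro ⟨hb, hc⟩
    have hck : (c : k) = a := by rw [hc]
    have key : ((c : k) + b + a) = b := by rw [hck]; linear_combination (a : k) * h2
    refine ⟨hc, hc.symm, ?_⟩
    rw [add_eq_left, key]
    exact (QuotientAddGroup.eq_zero_iff _).mpr hb

open Equiv MulAction in
lemma fix_r_iff (n : NN k) :
    permN (finRotate 3) n = n ↔ (n.2.1 = n.1 ∧ n.2.2.1 = n.1) := by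
  rw [permN_r]
  obtain ⟨a, b, c, d⟩ := n
  have h2 : (2 : k) = 0 := two_eq_zero
  simp only [Prod.mk.injEq]
  constructor
  · rintro ⟨hc, ha, hb⟩
    exact ⟨ha.symm, hc⟩
  · rintro ⟨hb, hc⟩
    have hbk : (b : k) = a := by rw [hb]
    have key : ((b : k) + a) = 0 := by rw [hbk]; linear_combination (a : k) * h2
    refine ⟨hc, hb.symm, hb.trans hc.symm, ?_⟩
    rw [add_eq_left, key]
    exact QuotientAddGroup.mk_zero _

open Equiv MulAction in
lemma fix_r'_iff (n : NN k) :
    permN (finRotate 3)⁻¹ n = n ↔ (n.2.1 = n.1 ∧ n.2.2.1 = n.1) := by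
  rw [permN_s]
  obtain ⟨a, b, c, d⟩ := n
  have h2 : (2 : k) = 0 := two_eq_zero
  simp only [sigmaN, Prod.mk.injEq]
  constructor
  · rintro ⟨hb, hc, -, -⟩
    exact ⟨hb, hc ▸ hb⟩
  · rintro ⟨hb, hc⟩
    have key : (QuotientAddGroup.mk (c : k) : k ⧸ ASrange k) + QuotientAddGroup.mk (b : k) = 0 := by
      rw [← QuotientAddGroup.mk_add]
      have : ((c : k) + b) = 0 := by
        rw [show (c : k) = a from by rw [hc], show (b : k) = a from by rw [hb]]
        linear_combination (a : k) * h2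
      rw [this]
      exact QuotientAddGroup.mk_zero _
    exact ⟨hb, hc.trans hb.symm, hc.symm, by rw [add_assoc, key, add_zero]⟩

/-! ### Counting equipment -/

def fix1Equiv : {n : NN k // permN 1 n = n} ≃ NN k :=
  Equiv.subtypeUnivEquiv permN_one

open Equiv in
def fixTEquiv : {n : NN k // permN (swap 1 2) n = n} ≃
    {a : kˣ // (a : k) ∈ ASrange k} × kˣ × (k ⧸ ASrange k) where
  toFun x := (⟨x.1.1, ((fix_t_iff x.1).mp x.2).1⟩, x.1.2.1, x.1.2.2.2)
  invFun y := ⟨(y.1.1, y.2.1, y.2.1, y.2.2), (fix_t_iff _).mpr ⟨y.1.2, rfl⟩⟩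
  left_inv x := by
    obtain ⟨⟨a, b, c, d⟩, hx⟩ := x
    have h := ((fix_t_iff _).mp hx).2
    exact Subtype.ext (by simp only at h ⊢; rw [h])
  right_inv y := rfl

open Equiv in
def fixS01Equiv : {n : NN k // permN (swap 0 1) n = n} ≃
    {a : kˣ // (a : k) ∈ ASrange k} × kˣ × (k ⧸ ASrange k) where
  toFun x := (⟨x.1.2.2.1, ((fix_s01_iff x.1).mp x.2).1⟩, x.1.1, x.1.2.2.2)
  invFun y := ⟨(y.2.1, y.2.1, y.1.1, y.2.2), (fix_s01_iff _).mpr ⟨y.1.2, rfl⟩⟩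
  left_inv x := by
    obtain ⟨⟨a, b, c, d⟩, hx⟩ := x
    have h := ((fix_s01_iff _).mp hx).2
    exact Subtype.ext (by simp only at h ⊢; rw [h])
  right_inv y := rfl

open Equiv in
def fixS02Equiv : {n : NN k // permN (swap 0 2) n = n} ≃
    {a : kˣ // (a : k) ∈ ASrange k} × kˣ × (k ⧸ ASrange k) where
  toFun x := (⟨x.1.2.1, ((fix_s02_iff x.1).mp x.2).1⟩, x.1.1, x.1.2.2.2)
  invFun y := ⟨(y.2.1, y.1.1, y.2.1, y.2.2), (fix_s02_iff _).mpr ⟨y.1.2, rfl⟩⟩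
  left_inv x := by
    obtain ⟨⟨a, b, c, d⟩, hx⟩ := x
    have h := ((fix_s02_iff _).mp hx).2
    exact Subtype.ext (by simp only at h ⊢; rw [h])
  right_inv y := rfl

open Equiv in
def fixREquiv : {n : NN k // permN (finRotate 3) n = n} ≃ kˣ × (k ⧸ ASrange k) where
  toFun x := (x.1.1, x.1.2.2.2)
  invFun y := ⟨(y.1, y.1, y.1, y.2), (fix_r_iff _).mpr ⟨rfl, rfl⟩⟩
  left_inv x := by
    obtain ⟨⟨a, b, c, d⟩, hx⟩ := x
    obtain ⟨h1, h2⟩ := (fix_r_iff _).mp hx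
    exact Subtype.ext (by simp only at h1 h2 ⊢; rw [h1, h2])
  right_inv y := rfl

open Equiv in
def fixR'Equiv : {n : NN k // permN (finRotate 3)⁻¹ n = n} ≃ kˣ × (k ⧸ ASrange k) where
  toFun x := (x.1.1, x.1.2.2.2)
  invFun y := ⟨(y.1, y.1, y.1, y.2), (fix_r'_iff _).mpr ⟨rfl, rfl⟩⟩
  left_inv x := by
    obtain ⟨⟨a, b, c, d⟩, hx⟩ := x
    obtain ⟨h1, h2⟩ := (fix_r'_iff _).mp hx
    exact Subtype.ext (by simp only at h1 h2 ⊢; rw [h1, h2])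
  right_inv y := rfl

def unitsASEquiv : {a : kˣ // (a : k) ∈ ASrange k} ≃ ((ASrange k : Set k) \ {0} : Set k) where
  toFun a := ⟨a.1.1, a.2, by simp [a.1.ne_zero]⟩
  invFun x := ⟨Units.mk0 x.1 (by simpa using x.2.2), x.2.1⟩
  left_inv a := Subtype.ext (Units.ext rfl)
  right_inv x := rfl

/-- The Artin–Schreier map as an additive monoid hom. -/
def ASmap (k : Type*) [Field k] [CharP k 2] : k →+ k where
  toFun x := x + x ^ 2
  map_zero' := by ring
  map_add' x y := by
    have h2 : (2 : k) = 0 := two_eq_zero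
    linear_combination (x * y) * h2

lemma ASrange_eq : ASrange k = (ASmap k).range := by
  ext x
  exact Iff.rfl

lemma ker_ASmap : ((ASmap k).ker : Set k) = {0, 1} := by
  ext x
  have h2 : (2 : k) = 0 := two_eq_zero
  simp only [SetLike.mem_coe, AddMonoidHom.mem_ker, Set.mem_insert_iff, Set.mem_singleton_iff,
    ASmap, AddMonoidHom.coe_mk, ZeroHom.coe_mk]
  constructor
  · intro h
    have hx : x * (1 + x) = 0 := by linear_combination h
    rcases mul_eq_zero.mp hx with h0 | h1
    · exact Or.inl h0
    · right
      linear_combination h1 - h2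
  · rintro (rfl | rfl)
    · ring
    · linear_combination h2


set_option maxHeartbeats 1000000 in
open Equiv in
/-- Let `q = 2^m` and `k = 𝔽_q`, and let `N = k* × k* × k* × (k/AS(k))`.
The bijections `τ(a,b,c,d) = (a,c,b,d+ā)` and `σ(a,b,c,d) = (b,c,a,d+c̄+b̄)` satisfy
`τ² = σ³ = (τσ)² = id`, so they define an action of `S₃` on `N`, and the number of orbits of
this action is `q(q−1)(2q−1)/6`. -/
theorem card_orbits_S3_split (m : ℕ) (hm : 0 < m)
    (k : Type*) [Field k] [Fintype k] [CharP k 2] (hcard : Fintype.card k = 2 ^ m) :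
    (∀ n : kˣ × kˣ × kˣ × (k ⧸ ASrange k), tauN (tauN n) = n) ∧
    (∀ n : kˣ × kˣ × kˣ × (k ⧸ ASrange k), sigmaN (sigmaN (sigmaN n)) = n) ∧
    (∀ n : kˣ × kˣ × kˣ × (k ⧸ ASrange k), tauN (sigmaN (tauN (sigmaN n))) = n) ∧
    6 * Nat.card (Quot fun n n' : kˣ × kˣ × kˣ × (k ⧸ ASrange k) =>
        n' = tauN n ∨ n' = sigmaN n)
      = 2 ^ m * (2 ^ m - 1) * (2 * 2 ^ m - 1) := by
  classical
  refine ⟨fun n => ?_, fun n => ?_, fun n => ?_, ?_⟩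
  · rw [← permN_t, ← permN_t, ← permN_mul,
      show (swap 1 2 * swap 1 2 : Perm (Fin 3)) = 1 from by decide, permN_one]
  · rw [← permN_s, ← permN_s, ← permN_s, ← permN_mul, ← permN_mul,
      show ((finRotate 3)⁻¹ * (finRotate 3)⁻¹ * (finRotate 3)⁻¹ : Perm (Fin 3)) = 1 from by decide,
      permN_one]
  · rw [← permN_t, ← permN_s, ← permN_t, ← permN_s, ← permN_mul, ← permN_mul, ← permN_mul,
      show (swap 1 2 * (finRotate 3)⁻¹ * swap 1 2 * (finRotate 3)⁻¹ : Perm (Fin 3)) = 1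
        from by decide, permN_one]
  -- the counting statement
  letI : Fintype (k ⧸ ASrange k) := Fintype.ofFinite _
  letI : ∀ g : Perm (Fin 3), Fintype (MulAction.fixedBy (NN k) g) := fun g => Fintype.ofFinite _
  letI : Fintype (Quotient (MulAction.orbitRel (Perm (Fin 3)) (NN k))) := Fintype.ofFinite _
  -- basic cardinalities
  have hq : Nat.card k = 2 ^ m := by rw [Nat.card_eq_fintype_card, hcard]
  have hu : Nat.card kˣ = 2 ^ m - 1 := by
    rw [Nat.card_eq_fintype_card, Fintype.card_units, hcard]
  have hker : Nat.card (ASmap k).ker = 2 := by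
    rw [← SetLike.coe_sort_coe, ker_ASmap, Nat.card_coe_set_eq, Set.ncard_pair zero_ne_one]
  have hiso : Nat.card (k ⧸ (ASmap k).ker) = Nat.card (ASrange k) := by
    rw [ASrange_eq]
    exact Nat.card_congr (QuotientAddGroup.quotientKerEquivRange (ASmap k)).toEquiv
  have hk1 : Nat.card (ASrange k) * 2 = 2 ^ m := by
    have h := AddSubgroup.card_eq_card_quotient_mul_card_addSubgroup (ASmap k).ker
    rw [hker, hiso] at h
    rw [← h, hq]
  have hpow : 2 ^ m = 2 ^ (m - 1) * 2 := by
    rw [← pow_succ]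
    congr 1
    omega
  have hAS : Nat.card (ASrange k) = 2 ^ (m - 1) :=
    Nat.eq_of_mul_eq_mul_right (by norm_num) (hk1.trans hpow)
  have hQ : Nat.card (k ⧸ ASrange k) = 2 := by
    have h := AddSubgroup.card_eq_card_quotient_mul_card_addSubgroup (ASrange k)
    rw [hq, hAS] at h
    have h' : Nat.card (k ⧸ ASrange k) * 2 ^ (m - 1) = 2 * 2 ^ (m - 1) := by
      rw [← h, hpow]
      ring
    exact Nat.eq_of_mul_eq_mul_right (pow_pos (by norm_num) _) h'
  have hA : Nat.card {a : kˣ // (a : k) ∈ ASrange k} = 2 ^ (m - 1) - 1 := by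
    rw [Nat.card_congr (unitsASEquiv (k := k)), Nat.card_coe_set_eq,
      Set.ncard_diff_singleton_of_mem (ASrange k).zero_mem, ← Nat.card_coe_set_eq,
      SetLike.coe_sort_coe, hAS]
  -- fixed point counts
  have cF1 : Nat.card (MulAction.fixedBy (NN k) (1 : Perm (Fin 3)))
      = (2 ^ m - 1) * ((2 ^ m - 1) * ((2 ^ m - 1) * 2)) := by
    rw [show Nat.card (MulAction.fixedBy (NN k) (1 : Perm (Fin 3))) = Nat.card (NN k) from
        Nat.card_congr (fix1Equiv (k := k)),
      Nat.card_prod, Nat.card_prod, Nat.card_prod, hu, hQ]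
  have cFt : Nat.card (MulAction.fixedBy (NN k) (swap 1 2 : Perm (Fin 3)))
      = (2 ^ (m - 1) - 1) * ((2 ^ m - 1) * 2) := by
    rw [show Nat.card (MulAction.fixedBy (NN k) (swap 1 2 : Perm (Fin 3)))
        = Nat.card ({a : kˣ // (a : k) ∈ ASrange k} × kˣ × (k ⧸ ASrange k)) from
        Nat.card_congr (fixTEquiv (k := k)),
      Nat.card_prod, Nat.card_prod, hu, hQ, hA]
  have cF01 : Nat.card (MulAction.fixedBy (NN k) (swap 0 1 : Perm (Fin 3)))
      = (2 ^ (m - 1) - 1) * ((2 ^ m - 1) * 2) := by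
    rw [show Nat.card (MulAction.fixedBy (NN k) (swap 0 1 : Perm (Fin 3)))
        = Nat.card ({a : kˣ // (a : k) ∈ ASrange k} × kˣ × (k ⧸ ASrange k)) from
        Nat.card_congr (fixS01Equiv (k := k)),
      Nat.card_prod, Nat.card_prod, hu, hQ, hA]
  have cF02 : Nat.card (MulAction.fixedBy (NN k) (swap 0 2 : Perm (Fin 3)))
      = (2 ^ (m - 1) - 1) * ((2 ^ m - 1) * 2) := by
    rw [show Nat.card (MulAction.fixedBy (NN k) (swap 0 2 : Perm (Fin 3)))
        = Nat.card ({a : kˣ // (a : k) ∈ ASrange k} × kˣ × (k ⧸ ASrange k)) from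
        Nat.card_congr (fixS02Equiv (k := k)),
      Nat.card_prod, Nat.card_prod, hu, hQ, hA]
  have cFr : Nat.card (MulAction.fixedBy (NN k) (finRotate 3 : Perm (Fin 3)))
      = (2 ^ m - 1) * 2 := by
    rw [show Nat.card (MulAction.fixedBy (NN k) (finRotate 3 : Perm (Fin 3)))
        = Nat.card (kˣ × (k ⧸ ASrange k)) from Nat.card_congr (fixREquiv (k := k)),
      Nat.card_prod, hu, hQ]
  have cFr' : Nat.card (MulAction.fixedBy (NN k) ((finRotate 3)⁻¹ : Perm (Fin 3)))
      = (2 ^ m - 1) * 2 := by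
    rw [show Nat.card (MulAction.fixedBy (NN k) ((finRotate 3)⁻¹ : Perm (Fin 3)))
        = Nat.card (kˣ × (k ⧸ ASrange k)) from Nat.card_congr (fixR'Equiv (k := k)),
      Nat.card_prod, hu, hQ]
  -- Burnside
  have burn := MulAction.sum_card_fixedBy_eq_card_orbits_mul_card_group (Perm (Fin 3)) (NN k)
  have huniv : (Finset.univ : Finset (Perm (Fin 3))) =
      {1, swap 0 1, swap 0 2, swap 1 2, finRotate 3, (finRotate 3)⁻¹} := by decide
  rw [huniv, show Fintype.card (Perm (Fin 3)) = 6 from by decide,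
    Finset.sum_insert (by decide), Finset.sum_insert (by decide), Finset.sum_insert (by decide),
    Finset.sum_insert (by decide), Finset.sum_insert (by decide), Finset.sum_singleton] at burn
  simp only [← Nat.card_eq_fintype_card] at burn
  rw [cF1, cF01, cF02, cFt, cFr, cFr'] at burn
  have hquot : Nat.card (Quot fun n n' : NN k => n' = tauN n ∨ n' = sigmaN n) =
      Nat.card (Quotient (MulAction.orbitRel (Perm (Fin 3)) (NN k))) :=
    Nat.card_congr quotEquiv
  rw [hquot]
  obtain ⟨y, hy⟩ : ∃ y, 2 ^ (m - 1) = y + 1 :=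
    ⟨2 ^ (m - 1) - 1, by have := pow_pos (show 0 < 2 by norm_num) (m - 1); omega⟩
  have hq2 : 2 ^ m = 2 * (y + 1) := by rw [hpow, hy]; ring
  have e1 : 2 ^ m - 1 = 2 * y + 1 := by omega
  have e2 : 2 ^ (m - 1) - 1 = y := by omega
  have e3 : 2 * 2 ^ m - 1 = 4 * y + 3 := by omega
  rw [e1, e2] at burn
  rw [e3, e1, hq2]
  have final : Nat.card (Quotient (MulAction.orbitRel (Perm (Fin 3)) (NN k))) * 6
      = 2 * (y + 1) * (2 * y + 1) * (4 * y + 3) := by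
    rw [← burn]
    ring
  omega
end

section
/- Let k be a field of characteristic 2. Let N = k* × k* × k* × (k/AS(k)) and consider the action of S₃ on N determined by the bijections τ(a,b,c,d) = (a, c, b, d + ā) and σ(a,b,c,d) = (b, c, a, d + c̄ + b̄) (which satisfy τ² = σ³ = (τσ)² = id). Then for (a,b,c,d) ∈ N, the stabilizer of (a,b,c,d) in S₃ has order 6 if a = b = c and a ∈ AS(k); order 3 if a = b = c and a ∉ AS(k); order 2 if exactly two of a, b, c coincide and the remaining one belongs to AS(k); and order 1 in all other cases. -/
variable {k : Type*} [Field k] [CharP k 2]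

/-- The six elements of the group `S₃ = ⟨τ, σ | τ² = σ³ = (τσ)² = 1⟩` acting on
`N = k* × k* × k* × (k/AS(k))`, enumerated as the words `1, σ, σ², τ, στ, σ²τ`. -/
def S3words : Fin 6 →
    ((kˣ × kˣ × kˣ × (k ⧸ ASrange k)) → (kˣ × kˣ × kˣ × (k ⧸ ASrange k))) :=
  ![id, sigmaN, sigmaN ∘ sigmaN, tauN, sigmaN ∘ tauN, sigmaN ∘ sigmaN ∘ tauN]

/-- Let `k` be a field of characteristic 2 and let `S₃` act on
`N = k* × k* × k* × (k/AS(k))` via `τ(a,b,c,d) = (a,c,b,d+ā)` and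
`σ(a,b,c,d) = (b,c,a,d+c̄+b̄)` (which satisfy `τ² = σ³ = (τσ)² = id`).  The stabilizer of
`(a,b,c,d)` has order 6 if `a = b = c ∈ AS(k)`; order 3 if `a = b = c ∉ AS(k)`; order 2 if
exactly two of `a, b, c` coincide and the remaining one belongs to `AS(k)`; and order 1
otherwise. -/
theorem card_stabilizer_S3_split (a b c : kˣ) (d : k ⧸ ASrange k) :
    (∀ n : kˣ × kˣ × kˣ × (k ⧸ ASrange k), tauN (tauN n) = n) ∧
    (∀ n : kˣ × kˣ × kˣ × (k ⧸ ASrange k), sigmaN (sigmaN (sigmaN n)) = n) ∧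
    (∀ n : kˣ × kˣ × kˣ × (k ⧸ ASrange k), tauN (sigmaN (tauN (sigmaN n))) = n) ∧
    ((a = b ∧ b = c ∧ (a : k) ∈ ASrange k) →
      Nat.card {i : Fin 6 // S3words i (a, b, c, d) = (a, b, c, d)} = 6) ∧
    ((a = b ∧ b = c ∧ (a : k) ∉ ASrange k) →
      Nat.card {i : Fin 6 // S3words i (a, b, c, d) = (a, b, c, d)} = 3) ∧
    (((a = b ∧ a ≠ c ∧ (c : k) ∈ ASrange k) ∨ (a = c ∧ a ≠ b ∧ (b : k) ∈ ASrange k) ∨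
        (b = c ∧ a ≠ b ∧ (a : k) ∈ ASrange k)) →
      Nat.card {i : Fin 6 // S3words i (a, b, c, d) = (a, b, c, d)} = 2) ∧
    (¬ ((a = b ∧ b = c) ∨ (a = b ∧ a ≠ c ∧ (c : k) ∈ ASrange k) ∨
        (a = c ∧ a ≠ b ∧ (b : k) ∈ ASrange k) ∨ (b = c ∧ a ≠ b ∧ (a : k) ∈ ASrange k)) →
      Nat.card {i : Fin 6 // S3words i (a, b, c, d) = (a, b, c, d)} = 1) := by
  
  classical
  have h2 : (2 : k) = 0 := by exact_mod_cast CharP.cast_eq_zero k 2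
  have hxx : ∀ x : k, x + x = 0 := fun x => by linear_combination x * h2
  have hcan : ∀ (q : k ⧸ ASrange k) (x : k),
      q + QuotientAddGroup.mk x + QuotientAddGroup.mk x = q := by
    intro q x
    rw [add_assoc, ← QuotientAddGroup.mk_add, hxx, QuotientAddGroup.mk_zero, add_zero]
  have rel_tau : ∀ n : kˣ × kˣ × kˣ × (k ⧸ ASrange k), tauN (tauN n) = n := by
    rintro ⟨x, y, z, w⟩
    simp only [tauN, Prod.mk.injEq]
    exact ⟨by trivial, by trivial, by trivial, hcan w x⟩
  have rel_sigma : ∀ n : kˣ × kˣ × kˣ × (k ⧸ ASrange k),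
      sigmaN (sigmaN (sigmaN n)) = n := by
    rintro ⟨x, y, z, w⟩
    simp only [sigmaN, Prod.mk.injEq]
    refine ⟨by trivial, by trivial, by trivial, ?_⟩
    induction w using QuotientAddGroup.induction_on with
    | _ t =>
      simp only [← QuotientAddGroup.mk_add]
      congr 1
      linear_combination ((x : k) + (y : k) + (z : k)) * h2
  have rel_ts : ∀ n : kˣ × kˣ × kˣ × (k ⧸ ASrange k),
      tauN (sigmaN (tauN (sigmaN n))) = n := by
    rintro ⟨x, y, z, w⟩
    simp only [sigmaN, tauN, Prod.mk.injEq]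
    refine ⟨by trivial, by trivial, by trivial, ?_⟩
    induction w using QuotientAddGroup.induction_on with
    | _ t =>
      simp only [← QuotientAddGroup.mk_add]
      congr 1
      linear_combination ((x : k) + (y : k) + (z : k)) * h2
  have hP0 : S3words 0 (a, b, c, d) = (a, b, c, d) := rfl
  have hP1 : S3words 1 (a, b, c, d) = (a, b, c, d) ↔ (a = b ∧ b = c) := by
    show sigmaN (a, b, c, d) = (a, b, c, d) ↔ _
    simp only [sigmaN, Prod.mk.injEq]
    constructor
    · rintro ⟨h1, h2', h3, h4⟩
      exact ⟨h1.symm, h2'.symm⟩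
    · rintro ⟨rfl, rfl⟩
      exact ⟨by trivial, by trivial, by trivial, hcan d _⟩
  have hP2 : S3words 2 (a, b, c, d) = (a, b, c, d) ↔ (a = b ∧ b = c) := by
    show sigmaN (sigmaN (a, b, c, d)) = (a, b, c, d) ↔ _
    simp only [sigmaN, Prod.mk.injEq]
    constructor
    · rintro ⟨h1, h2', h3, h4⟩
      exact ⟨h2', h3⟩
    · rintro ⟨rfl, rfl⟩
      refine ⟨by trivial, by trivial, by trivial, ?_⟩
      rw [hcan, hcan]
  have hP3 : S3words 3 (a, b, c, d) = (a, b, c, d) ↔ (b = c ∧ (a : k) ∈ ASrange k) := by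
    show tauN (a, b, c, d) = (a, b, c, d) ↔ _
    simp only [tauN, Prod.mk.injEq]
    constructor
    · rintro ⟨h1, h2', h3, h4⟩
      exact ⟨h2'.symm, (QuotientAddGroup.eq_zero_iff _).mp (add_eq_left.mp h4)⟩
    · rintro ⟨rfl, ha⟩
      refine ⟨by trivial, by trivial, by trivial, ?_⟩
      rw [(QuotientAddGroup.eq_zero_iff _).mpr ha, add_zero]
  have hP4 : S3words 4 (a, b, c, d) = (a, b, c, d) ↔ (a = c ∧ (b : k) ∈ ASrange k) := by
    show sigmaN (tauN (a, b, c, d)) = (a, b, c, d) ↔ _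
    simp only [sigmaN, tauN, Prod.mk.injEq]
    constructor
    · rintro ⟨h1, h2', h3, h4⟩
      subst h3
      refine ⟨rfl, ?_⟩
      rw [add_right_comm, hcan] at h4
      exact (QuotientAddGroup.eq_zero_iff _).mp (add_eq_left.mp h4)
    · rintro ⟨rfl, hb⟩
      refine ⟨by trivial, by trivial, by trivial, ?_⟩
      rw [add_right_comm, hcan, (QuotientAddGroup.eq_zero_iff _).mpr hb, add_zero]
  have hP5 : S3words 5 (a, b, c, d) = (a, b, c, d) ↔ (a = b ∧ (c : k) ∈ ASrange k) := by
    show sigmaN (sigmaN (tauN (a, b, c, d))) = (a, b, c, d) ↔ _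
    simp only [sigmaN, tauN, Prod.mk.injEq]
    constructor
    · rintro ⟨h1, h2', h3, h4⟩
      subst h2'
      refine ⟨rfl, ?_⟩
      rw [hcan, add_right_comm, add_right_comm _ _ (QuotientAddGroup.mk (c : k)),
        hcan] at h4
      exact (QuotientAddGroup.eq_zero_iff _).mp (add_eq_left.mp h4)
    · rintro ⟨rfl, hc⟩
      refine ⟨by trivial, by trivial, by trivial, ?_⟩
      rw [hcan, add_right_comm, add_right_comm _ _ (QuotientAddGroup.mk (c : k)), hcan,
        (QuotientAddGroup.eq_zero_iff _).mpr hc, add_zero]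
  have key : ∀ s : Finset (Fin 6),
      (∀ i : Fin 6, S3words i (a, b, c, d) = (a, b, c, d) ↔ i ∈ s) →
      Nat.card {i : Fin 6 // S3words i (a, b, c, d) = (a, b, c, d)} = s.card := by
    intro s hs
    rw [Nat.card_congr (Equiv.subtypeEquivRight hs), Nat.card_eq_fintype_card,
      Fintype.card_coe]
  refine ⟨rel_tau, rel_sigma, rel_ts, ?_, ?_, ?_, ?_⟩
  · rintro ⟨rfl, rfl, ha⟩
    rw [key Finset.univ ?_]
    · rfl
    · intro i
      fin_cases i <;> simp [hP0, hP1, hP2, hP3, hP4, hP5, ha]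
  · rintro ⟨rfl, rfl, ha⟩
    rw [key {0, 1, 2} ?_]
    · rfl
    · intro i
      fin_cases i <;> simp [hP0, hP1, hP2, hP3, hP4, hP5, ha]
  · rintro (⟨rfl, hac, hc⟩ | ⟨rfl, hab, hb⟩ | ⟨rfl, hab, ha⟩)
    · rw [key {0, 5} ?_]
      · rfl
      · intro i
        fin_cases i <;> simp [hP0, hP1, hP2, hP3, hP4, hP5, hac, hc] <;> tauto
    · rw [key {0, 4} ?_]
      · rfl
      · intro i
        fin_cases i <;> simp [hP0, hP1, hP2, hP3, hP4, hP5, hab, hb] <;> tauto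
    · rw [key {0, 3} ?_]
      · rfl
      · intro i
        fin_cases i <;> simp [hP0, hP1, hP2, hP3, hP4, hP5, hab, ha] <;> tauto
  · intro h
    simp only [not_or] at h
    obtain ⟨h1, h2', h3, h4⟩ := h
    rw [key {0} ?_]
    · rfl
    · intro i
      fin_cases i
      · exact iff_of_true hP0 (by decide)
      · exact iff_of_false (fun hp => h1 (hP1.mp hp)) (by decide)
      · exact iff_of_false (fun hp => h1 (hP2.mp hp)) (by decide)
      · refine iff_of_false (fun hp => ?_) (by decide)
        obtain ⟨rfl, ha⟩ := hP3.mp hp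
        by_cases hab : a = b
        · exact h1 ⟨hab, rfl⟩
        · exact h4 ⟨rfl, hab, ha⟩
      · refine iff_of_false (fun hp => ?_) (by decide)
        obtain ⟨rfl, hb⟩ := hP4.mp hp
        by_cases hab : a = b
        · exact h1 ⟨hab, hab.symm⟩
        · exact h3 ⟨rfl, hab, hb⟩
      · refine iff_of_false (fun hp => ?_) (by decide)
        obtain ⟨rfl, hc⟩ := hP5.mp hp
        by_cases hac : a = c
        · exact h1 ⟨rfl, hac⟩
        · exact h2' ⟨rfl, hac, hc⟩
end

section
/- Let k be a field of characteristic 2 and let t, s ∈ k be such that x³ + t x + s is irreducible in k[x] (in particular s ≠ 0). Let K = k[x]/(x³ + t x + s), let θ denote the class of x, and for a, b, c ∈ k let ξ = (aθ⁵ + bθ⁴ + cθ³)/s² ∈ K. Then the characteristic polynomial over k of the k-linear map 'multiplication by ξ' on K equals X³ + j₃X² + j₂X + j₁, where j₃ = (ta + c)/s, j₂ = ((a²t² + abs + c²)(s² + t³) + cst(tb + sa) + b²t⁴)/s⁴, and j₁ = (a²(s²a + stb + t²c) + bc(tb + sa) + sb³ + c³)/s³. -/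
/-!
In the basis `1, θ, θ²` of `K`, the relation `θ³ = -tθ - s` rewrites `ξ` as `α + βθ + γθ²` with
`α = (at - c)/s`, `β = (at² - bs - ct)/s²`, `γ = -(as + bt)/s²`. Reading off the matrix of
multiplication by `α + βθ + γθ²` gives its characteristic polynomial for any cubic `x³ + tx + s`
over any field; substituting `α, β, γ` and reducing modulo `2` yields the coefficients `j₃, j₂, j₁`.
-/

open Polynomial

/-- The characteristic polynomial over `k` of the `k`-linear map "multiplication by `ξ`"
on `k[x]/(f)`. -/
noncomputable def mulCharpoly {k : Type*} [Field k] {f : k[X]} (hf : f ≠ 0)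
    (ξ : AdjoinRoot f) : k[X] :=
  haveI : Module.Free k (AdjoinRoot f) :=
    Module.Free.of_basis (AdjoinRoot.powerBasis hf).basis
  haveI : Module.Finite k (AdjoinRoot f) :=
    Module.Finite.of_basis (AdjoinRoot.powerBasis hf).basis
  (LinearMap.mul k (AdjoinRoot f) ξ).charpoly

theorem Matrix.charpoly_fin_three {R : Type*} [CommRing R] (M : Matrix (Fin 3) (Fin 3) R) :
    M.charpoly = X ^ 3 - C (M 0 0 + M 1 1 + M 2 2) * X ^ 2
      + C (M 0 0 * M 1 1 + M 0 0 * M 2 2 + M 1 1 * M 2 2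
            - M 0 1 * M 1 0 - M 0 2 * M 2 0 - M 1 2 * M 2 1) * X
      - C M.det := by
  rw [Matrix.charpoly, Matrix.det_fin_three, Matrix.det_fin_three]
  simp only [Matrix.charmatrix_apply, Matrix.diagonal_apply, Fin.reduceEq, reduceIte, map_sub,
    map_add, map_mul]
  ring

theorem mulCharpoly_eq_charpoly_leftMulMatrix {k : Type*} [Field k] {f : k[X]} (hf : f ≠ 0)
    {ι : Type*} [Fintype ι] [DecidableEq ι] (b : Module.Basis ι k (AdjoinRoot f))
    (ξ : AdjoinRoot f) :
    mulCharpoly hf ξ = (Algebra.leftMulMatrix b ξ).charpoly :=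
  have : Module.Free k (AdjoinRoot f) := .of_basis b
  have : Module.Finite k (AdjoinRoot f) := .of_basis b
  (LinearMap.charpoly_toMatrix _ b).symm

namespace AdjoinRoot

section CommRing

variable {R : Type*} [CommRing R] (t s : R)

theorem root_pow_three_of_cubic :
    root (X ^ 3 + C t * X + C s) ^ 3
      = -(algebraMap R _ t * root (X ^ 3 + C t * X + C s)) - algebraMap R _ s := by
  have h := eval₂_root (X ^ 3 + C t * X + C s)
  simp only [eval₂_add, eval₂_mul, eval₂_pow, eval₂_C, eval₂_X, ← algebraMap_eq] at h
  linear_combination h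

theorem algebraMap_mul_root_pow_five_add (A B D : R) :
    algebraMap R _ A * root (X ^ 3 + C t * X + C s) ^ 5
        + algebraMap R _ B * root (X ^ 3 + C t * X + C s) ^ 4
        + algebraMap R _ D * root (X ^ 3 + C t * X + C s) ^ 3
      = algebraMap R _ (A * t * s - D * s)
        + algebraMap R _ (A * t ^ 2 - B * s - D * t) * root (X ^ 3 + C t * X + C s)
        + algebraMap R _ (-(A * s) - B * t) * root (X ^ 3 + C t * X + C s) ^ 2 := by
  simp only [map_sub, map_mul, map_neg, map_pow]
  linear_combination (algebraMap R _ A * (root _ ^ 2 - algebraMap R _ t)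
    + algebraMap R _ B * root _ + algebraMap R _ D) * root_pow_three_of_cubic t s

variable [Nontrivial R]

noncomputable def cubicBasis : Module.Basis (Fin 3) R (AdjoinRoot (X ^ 3 + C t * X + C s)) :=
  (powerBasis' (by monicity! : (X ^ 3 + C t * X + C s).Monic)).basis.reindex
    (finCongr (by rw [powerBasis'_dim]; compute_degree!))

theorem cubicBasis_apply (i : Fin 3) :
    cubicBasis t s i = root (X ^ 3 + C t * X + C s) ^ (i : ℕ) := by
  simp [cubicBasis, powerBasis'_gen]

theorem leftMulMatrix_cubicBasis (α β γ : R) :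
    Algebra.leftMulMatrix (cubicBasis t s)
        (algebraMap R _ α + algebraMap R _ β * root (X ^ 3 + C t * X + C s)
          + algebraMap R _ γ * root (X ^ 3 + C t * X + C s) ^ 2)
      = !![α, -(γ * s), -(β * s); β, α - γ * t, -(β * t) - γ * s; γ, β, α - γ * t] := by
  apply (Matrix.toLin (cubicBasis t s) (cubicBasis t s)).injective
  refine (cubicBasis t s).ext fun j => ?_
  rw [Algebra.leftMulMatrix_apply, Matrix.toLin_toMatrix, Matrix.toLin_self, Fin.sum_univ_three]
  fin_cases j <;>
    simp only [Fin.zero_eta, Fin.mk_one, Fin.reduceFinMk, Fin.isValue, Fin.coe_ofNat_eq_mod,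
      Nat.zero_mod, Nat.one_mod, Nat.mod_succ, cubicBasis_apply, Algebra.coe_lmul_eq_mul,
      LinearMap.mul_apply', Algebra.smul_def, Matrix.of_apply, Matrix.cons_val', Matrix.cons_val,
      Matrix.cons_val_zero, Matrix.cons_val_one, Matrix.cons_val_fin_one, map_neg, map_sub, map_mul]
  · ring
  · linear_combination algebraMap R _ γ * root_pow_three_of_cubic t s
  · linear_combination (algebraMap R _ β + algebraMap R _ γ * root _) * root_pow_three_of_cubic t s

end CommRing

theorem mulCharpoly_cubic {k : Type*} [Field k] {t s : k} (hf : (X ^ 3 + C t * X + C s : k[X]) ≠ 0)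
    (α β γ : k) :
    mulCharpoly hf (algebraMap k _ α + algebraMap k _ β * root (X ^ 3 + C t * X + C s)
        + algebraMap k _ γ * root (X ^ 3 + C t * X + C s) ^ 2)
      = X ^ 3 + C (2 * γ * t - 3 * α) * X ^ 2
        + C (3 * α ^ 2 - 4 * α * γ * t + γ ^ 2 * t ^ 2 + β ^ 2 * t + 3 * β * γ * s) * X
        + C (β ^ 3 * s - α ^ 3 + 2 * α ^ 2 * γ * t - α * γ ^ 2 * t ^ 2 - α * β ^ 2 * t
          - 3 * α * β * γ * s + β * γ ^ 2 * s * t - γ ^ 3 * s ^ 2) := by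
  rw [mulCharpoly_eq_charpoly_leftMulMatrix hf (cubicBasis t s), leftMulMatrix_cubicBasis,
    Matrix.charpoly_fin_three, Matrix.det_fin_three]
  simp only [Fin.isValue, Matrix.of_apply, Matrix.cons_val', Matrix.cons_val_zero,
    Matrix.cons_val_one, Matrix.cons_val_fin_one, Matrix.cons_val, map_add, map_sub, map_mul,
    map_neg, map_pow, map_ofNat]
  ring

end AdjoinRoot

/-- Let `k` be a field of characteristic 2 and `t, s ∈ k` with
`x³ + t x + s` irreducible in `k[x]` (in particular `s ≠ 0`).  Let `K = k[x]/(x³ + t x + s)`,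
let `θ` be the class of `x`, and for `a, b, c ∈ k` let `ξ = (aθ⁵ + bθ⁴ + cθ³)/s² ∈ K`.  Then
the characteristic polynomial over `k` of the `k`-linear map "multiplication by `ξ`" on `K`
equals `X³ + j₃X² + j₂X + j₁` with `j₃ = (ta + c)/s`,
`j₂ = ((a²t² + abs + c²)(s² + t³) + cst(tb + sa) + b²t⁴)/s⁴` and
`j₁ = (a²(s²a + stb + t²c) + bc(tb + sa) + sb³ + c³)/s³`. -/
theorem charpoly_mul_xi (k : Type*) [Field k] [CharP k 2] (t s : k) (hs : s ≠ 0)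
    (hirr : Irreducible (X ^ 3 + C t * X + C s : k[X])) (a b c : k)
    (θ ξ : AdjoinRoot (X ^ 3 + C t * X + C s : k[X]))
    (hθ : θ = AdjoinRoot.root _)
    (hξ : ξ = algebraMap k _ (a / s ^ 2) * θ ^ 5 + algebraMap k _ (b / s ^ 2) * θ ^ 4
        + algebraMap k _ (c / s ^ 2) * θ ^ 3) :
    mulCharpoly hirr.ne_zero ξ
      = X ^ 3 + C ((t * a + c) / s) * X ^ 2
        + C (((a ^ 2 * t ^ 2 + a * b * s + c ^ 2) * (s ^ 2 + t ^ 3)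
              + c * s * t * (t * b + s * a) + b ^ 2 * t ^ 4) / s ^ 4) * X
        + C ((a ^ 2 * (s ^ 2 * a + s * t * b + t ^ 2 * c) + b * c * (t * b + s * a)
              + s * b ^ 3 + c ^ 3) / s ^ 3) := by
  subst hθ hξ
  rw [AdjoinRoot.algebraMap_mul_root_pow_five_add, AdjoinRoot.mulCharpoly_cubic]
  congrm X ^ 3 + C ?_ * X ^ 2 + C ?_ * X + C ?_ <;> grind
end

section
/- Let q = 2^m and k = 𝔽_q, and let f : k → k be the additive map f(x) = x¹⁶ + x. Then the quotient group k/f(k) has exactly 2^{gcd(m,4)} elements; in particular it has 2 elements if m is odd, 4 elements if m ≡ 2 (mod 4), and 16 elements if 4 divides m. -/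
/-- The image of the additive map `f(x) = x¹⁶ + x` of a field of characteristic 2, as an
additive subgroup. -/
def Frange (k : Type*) [Field k] [CharP k 2] : AddSubgroup k where
  carrier := Set.range fun x : k => x ^ 16 + x
  zero_mem' := ⟨0, by norm_num⟩
  add_mem' := by
    rintro _ _ ⟨x, rfl⟩ ⟨y, rfl⟩
    refine ⟨x + y, ?_⟩
    have h16 : (16 : ℕ) = 2 ^ 4 := by norm_num
    have hpow : (x + y) ^ 16 = x ^ 16 + y ^ 16 := by
      rw [h16]
      exact add_pow_char_pow x y 2 4
    show (x + y) ^ 16 + (x + y) = (x ^ 16 + x) + (y ^ 16 + y)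
    rw [hpow]
    ring
  neg_mem' := by
    rintro _ ⟨x, rfl⟩
    refine ⟨x, ?_⟩
    have h2 : (2 : k) = 0 := by exact_mod_cast CharP.cast_eq_zero k 2
    linear_combination (x ^ 16 + x) * h2

/-! In characteristic 2 the map `f(x) = x¹⁶ + x` is the additive endomorphism `x ↦ x^(2^4) - x`
of the finite group `k`, so `k / f(k)` has as many elements as `ker f`. That kernel consists of
`0` and the solutions of `x^(2^4 - 1) = 1` in the cyclic group `kˣ` of order `2^m - 1`, of which
there are `gcd(2^4 - 1, 2^m - 1) = 2^gcd(4, m) - 1`. -/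

section FiniteField

variable {k : Type*} [Field k]

theorem setOf_pow_eq_self_eq_insert_zero {n : ℕ} (hn : 0 < n) :
    {x : k | x ^ n = x} = insert 0 (Units.val '' (powMonoidHom (n - 1) : kˣ →* kˣ).ker) := by
  ext x
  rcases eq_or_ne x 0 with rfl | hx
  · simp [hn.ne']
  · have hpow : x ^ n = x ↔ x ^ (n - 1) = 1 := by
      rw [← mul_eq_right₀ hx, ← pow_succ, Nat.sub_add_cancel hn]
    simp only [Set.mem_ofPred_eq, hpow, Set.mem_insert_iff, hx, false_or, Set.mem_image,
      SetLike.mem_coe, MonoidHom.mem_ker, powMonoidHom_apply]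
    constructor
    · intro h
      exact ⟨Units.mk0 x hx, Units.ext (by simpa using h), rfl⟩
    · rintro ⟨u, hu, rfl⟩
      rw [← Units.val_pow_eq_pow_val, hu, Units.val_one]

variable [Finite k]

theorem ncard_setOf_pow_eq_self {n : ℕ} (hn : 0 < n) :
    {x : k | x ^ n = x}.ncard = (Nat.card k - 1).gcd (n - 1) + 1 := by
  rw [setOf_pow_eq_self_eq_insert_zero hn, Set.ncard_insert_of_notMem (by simp),
    Set.ncard_image_of_injective _ Units.val_injective, ← Nat.card_coe_set_eq,
    SetLike.coe_sort_coe, IsCyclic.card_powMonoidHom_ker, Nat.card_units]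

variable (p : ℕ) [ExpChar k p]

theorem card_ker_iterateFrobenius_sub_id {m : ℕ} (hcard : Nat.card k = p ^ m) (e : ℕ) :
    Nat.card ((iterateFrobenius k p e : k →+ k) - AddMonoidHom.id k).ker = p ^ m.gcd e := by
  have hker : (((iterateFrobenius k p e : k →+ k) - AddMonoidHom.id k).ker : Set k) =
      {x | x ^ p ^ e = x} := by
    ext x
    simp [sub_eq_zero, iterateFrobenius_def]
  rw [← SetLike.coe_sort_coe, hker, Nat.card_coe_set_eq, ncard_setOf_pow_eq_self
    (expChar_pow_pos k p e), hcard, Nat.pow_sub_one_gcd_pow_sub_one,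
    Nat.sub_add_cancel (Nat.one_le_pow _ _ (expChar_pos k p))]

theorem card_quotient_range_iterateFrobenius_sub_id {m : ℕ} (hcard : Nat.card k = p ^ m)
    (e : ℕ) :
    Nat.card (k ⧸ ((iterateFrobenius k p e : k →+ k) - AddMonoidHom.id k).range) =
      p ^ m.gcd e := by
  rw [← AddSubgroup.index_eq_card, AddSubgroup.index_range,
    card_ker_iterateFrobenius_sub_id p hcard]

end FiniteField

theorem Frange_eq_range_iterateFrobenius_sub_id (k : Type*) [Field k] [CharP k 2] :
    Frange k = ((iterateFrobenius k 2 4 : k →+ k) - AddMonoidHom.id k).range := by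
  ext x
  change x ∈ Set.range _ ↔ _
  simp [iterateFrobenius_def, CharTwo.sub_eq_add]

theorem card_quotient_frobenius_sixteen_general (m : ℕ)
    (k : Type*) [Field k] [Fintype k] [CharP k 2] (hcard : Fintype.card k = 2 ^ m) :
    Nat.card (k ⧸ Frange k) = 2 ^ Nat.gcd m 4 ∧
    (Odd m → Nat.card (k ⧸ Frange k) = 2) ∧
    (m % 4 = 2 → Nat.card (k ⧸ Frange k) = 4) ∧
    (4 ∣ m → Nat.card (k ⧸ Frange k) = 16) := by
  have hquot : Nat.card (k ⧸ Frange k) = 2 ^ Nat.gcd m 4 := by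
    rw [Frange_eq_range_iterateFrobenius_sub_id]
    exact card_quotient_range_iterateFrobenius_sub_id 2
      (by rw [Nat.card_eq_fintype_card, hcard]) 4
  have hgcd : Nat.gcd m 4 = Nat.gcd (m % 4) 4 := by rw [Nat.gcd_comm, Nat.gcd_rec]
  refine ⟨hquot, fun hodd => ?_, fun hm2 => ?_, fun hm4 => ?_⟩
  · have hmod : m % 4 = 1 ∨ m % 4 = 3 := by have := Nat.odd_iff.mp hodd; omega
    rcases hmod with h | h <;> rw [hquot, hgcd, h] <;> rfl
  · rw [hquot, hgcd, hm2]; rfl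
  · rw [hquot, hgcd, Nat.mod_eq_zero_of_dvd hm4]; rfl

/-- Let `q = 2^m`, `k = 𝔽_q`, and let `f : k → k` be the additive map
`f(x) = x¹⁶ + x`.  Then the quotient group `k/f(k)` has exactly `2^gcd(m,4)` elements; in
particular it has 2 elements if `m` is odd, 4 elements if `m ≡ 2 (mod 4)`, and 16 elements
if `4 ∣ m`. -/
theorem card_quotient_frobenius_sixteen (m : ℕ) (hm : 0 < m)
    (k : Type*) [Field k] [Fintype k] [CharP k 2] (hcard : Fintype.card k = 2 ^ m) :
    Nat.card (k ⧸ Frange k) = 2 ^ Nat.gcd m 4 ∧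
    (Odd m → Nat.card (k ⧸ Frange k) = 2) ∧
    (m % 4 = 2 → Nat.card (k ⧸ Frange k) = 4) ∧
    (4 ∣ m → Nat.card (k ⧸ Frange k) = 16) :=
  card_quotient_frobenius_sixteen_general m k hcard
end
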